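/- arXiv:2108.12373 — 6 statements merged into one kernel-verified Lean document; each statement's English description precedes it below -/
import Mathlib

section
/- Suppose 0 < α < 1/λ₁, λ_k > 0, z_k^(0) ≠ 0 and ‖x^(0)‖ = 1. Then there exists a constant a₁ > 0 such that for all t ≥ 0, Σ_{l=1}^{k−1} (z_l^(t))² ≤ a₁ γ_k^t, where γ_k = (1/(1 + αλ_k))² < 1. In particular the lower-order coefficients z_1^(t), ..., z_{k−1}^(t) of the normalized generalized Krasulina iterate converge to 0 at a linear rate. -/
set_option autoImplicit false

open scoped RealInnerProductSpace

/-- `matVec A v` is the matrix-vector product `A v`, viewed as a map on Euclidean space. -/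
noncomputable def matVec {n : ℕ} (A : Matrix (Fin n) (Fin n) ℝ)
    (v : EuclideanSpace ℝ (Fin n)) : EuclideanSpace ℝ (Fin n) :=
  WithLp.toLp 2 (A.mulVec v)

/-!
In the eigenbasis, one step multiplies every deflated coefficient `⟪q p, x⟫` (`p < k - 1`) by
`u = 1 - α R(x)`, where `R` is the Rayleigh quotient, and the coefficient `⟪q (k - 1), x⟫` by
`u + α λ_k`. Since `0 ≤ R ≤ λ₁ < 1 / α`, we have `0 ≤ u ≤ 1`, hence
`u / (u + α λ_k) ≤ 1 / (1 + α λ_k)`, so the squared ratio `(⟪q p, x⟫ / ⟪q (k - 1), x⟫) ^ 2`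
shrinks by the factor `γ` at every step. It dominates `z_p ^ 2` because
`⟪q (k - 1), x⟫ ^ 2 ≤ ‖x‖ ^ 2`.
-/

theorem div_add_le_one_div_one_add {u c : ℝ} (hu0 : 0 ≤ u) (hu1 : u ≤ 1) (hc : 0 < c) :
    u / (u + c) ≤ 1 / (1 + c) := by
  rw [div_le_div_iff₀ (by positivity) (by positivity)]
  nlinarith

theorem ne_zero_of_mul_recurrence {b m : ℕ → ℝ} (hb : ∀ t, b (t + 1) = m t * b t)
    (hm : ∀ t, m t ≠ 0) (h0 : b 0 ≠ 0) (t : ℕ) : b t ≠ 0 := by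
  induction t with
  | zero => exact h0
  | succ t ih => rw [hb]; exact mul_ne_zero (hm t) ih

theorem sq_div_le_geometric {a b u : ℕ → ℝ} {c : ℝ} (hc : 0 < c) (hu0 : ∀ t, 0 ≤ u t)
    (hu1 : ∀ t, u t ≤ 1) (ha : ∀ t, a (t + 1) = u t * a t)
    (hb : ∀ t, b (t + 1) = (u t + c) * b t) (t : ℕ) :
    (a t / b t) ^ 2 ≤ ((1 / (1 + c)) ^ 2) ^ t * (a 0 / b 0) ^ 2 := by
  induction t with
  | zero => simp
  | succ t ih =>
    have hfac : (u t / (u t + c)) ^ 2 ≤ (1 / (1 + c)) ^ 2 :=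
      pow_le_pow_left₀ (div_nonneg (hu0 t) (by linarith [hu0 t]))
        (div_add_le_one_div_one_add (hu0 t) (hu1 t) hc) 2
    calc (a (t + 1) / b (t + 1)) ^ 2 = (u t / (u t + c)) ^ 2 * (a t / b t) ^ 2 := by
          rw [ha, hb, mul_div_mul_comm, mul_pow]
      _ ≤ (1 / (1 + c)) ^ 2 * (((1 / (1 + c)) ^ 2) ^ t * (a 0 / b 0) ^ 2) :=
          mul_le_mul hfac ih (sq_nonneg _) (sq_nonneg _)
      _ = ((1 / (1 + c)) ^ 2) ^ (t + 1) * (a 0 / b 0) ^ 2 := by ring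

theorem exists_pos_sum_le_mul_pow {κ : Type*} [Fintype κ] {f : κ → ℕ → ℝ} {g : κ → ℝ}
    {γ : ℝ} (hγ : 0 ≤ γ) (hg : ∀ p, 0 ≤ g p) (hf : ∀ p t, f p t ≤ γ ^ t * g p) :
    ∃ a > (0 : ℝ), ∀ t, ∑ p, f p t ≤ a * γ ^ t := by
  have hsum : 0 ≤ ∑ p, g p := Finset.sum_nonneg fun p _ => hg p
  refine ⟨1 + ∑ p, g p, by linarith, fun t => ?_⟩
  calc ∑ p, f p t ≤ ∑ p, γ ^ t * g p := Finset.sum_le_sum fun p _ => hf p t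
    _ = (∑ p, g p) * γ ^ t := by rw [← Finset.mul_sum, mul_comm]
    _ ≤ (1 + ∑ p, g p) * γ ^ t := by gcongr; linarith

section InnerProductSpace

variable {ι κ E : Type*} [Fintype κ] [NormedAddCommGroup E] [InnerProductSpace ℝ E]

theorem OrthonormalBasis.inner_self_apply_le_mul_norm_sq [Fintype ι]
    (b : OrthonormalBasis ι ℝ E) {T : E → E} {μ : ι → ℝ} {M : ℝ}
    (hT : ∀ i x, ⟪b i, T x⟫ = μ i * ⟪b i, x⟫) (hμ : ∀ i, μ i ≤ M) (x : E) :
    ⟪x, T x⟫ ≤ M * ‖x‖ ^ 2 := by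
  calc ⟪x, T x⟫ = ∑ i, μ i * ⟪b i, x⟫ ^ 2 := by
        rw [← b.sum_inner_mul_inner]
        refine Finset.sum_congr rfl fun i _ => ?_
        rw [hT, real_inner_comm]; ring
    _ ≤ ∑ i, M * ⟪b i, x⟫ ^ 2 := by gcongr with i; exact hμ i
    _ = M * ‖x‖ ^ 2 := by rw [← Finset.mul_sum, b.sum_sq_inner_right]

theorem sq_inner_smul_inv_norm_le_sq_div {e x : E} (he : ‖e‖ = 1) (hx : ⟪e, x⟫ ≠ 0) (v : E) :
    ⟪v, ‖x‖⁻¹ • x⟫ ^ 2 ≤ (⟪v, x⟫ / ⟪e, x⟫) ^ 2 := by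
  have hex : ⟪e, x⟫ ^ 2 ≤ ‖x‖ ^ 2 := by
    simpa [he] using sq_le_sq' (abs_le.1 (abs_real_inner_le_norm e x)).1
      (abs_le.1 (abs_real_inner_le_norm e x)).2
  rw [real_inner_smul_right, div_pow, mul_pow, inv_pow, inv_mul_eq_div]
  exact div_le_div_of_nonneg_left (sq_nonneg _) (by positivity) hex

variable {b : ι → E} {μ : ι → ℝ} {s : κ → ι} {T : E → E} {α r : ℝ} {x y : E}

theorem inner_krasulina_step (hT : ∀ i x, ⟪b i, T x⟫ = μ i * ⟪b i, x⟫)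
    (hy : y = x + α • (T x - r • x - ∑ p, (μ (s p) * ⟪b (s p), x⟫) • b (s p))) (i : ι) :
    ⟪b i, y⟫ = (1 - α * r + α * μ i) * ⟪b i, x⟫ -
      α * ⟪b i, ∑ p, (μ (s p) * ⟪b (s p), x⟫) • b (s p)⟫ := by
  rw [hy]
  simp only [inner_add_right, inner_sub_right, real_inner_smul_right, hT]
  ring

theorem inner_krasulina_step_deflated (hb : Orthonormal ℝ b) (hs : s.Injective)
    (hT : ∀ i x, ⟪b i, T x⟫ = μ i * ⟪b i, x⟫)
    (hy : y = x + α • (T x - r • x - ∑ p, (μ (s p) * ⟪b (s p), x⟫) • b (s p))) (p : κ) :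
    ⟪b (s p), y⟫ = (1 - α * r) * ⟪b (s p), x⟫ := by
  have hdefl := (hb.comp s hs).inner_right_fintype (fun p' => μ (s p') * ⟪b (s p'), x⟫) p
  simp only [Function.comp_apply] at hdefl
  rw [inner_krasulina_step hT hy, hdefl]
  ring

theorem inner_krasulina_step_of_notMem_range (hb : Orthonormal ℝ b)
    (hT : ∀ i x, ⟪b i, T x⟫ = μ i * ⟪b i, x⟫)
    (hy : y = x + α • (T x - r • x - ∑ p, (μ (s p) * ⟪b (s p), x⟫) • b (s p))) {i : ι}
    (hi : i ∉ Set.range s) :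
    ⟪b i, y⟫ = (1 - α * r + α * μ i) * ⟪b i, x⟫ := by
  rw [inner_krasulina_step hT hy, inner_sum, Finset.sum_eq_zero, mul_zero, sub_zero]
  intro p _
  rw [real_inner_smul_right, hb.inner_eq_zero (fun h => hi ⟨p, h.symm⟩), mul_zero]

theorem sq_inner_normalize_krasulina_le {x : ℕ → E} {r : ℕ → ℝ} (hb : Orthonormal ℝ b)
    (hs : s.Injective) (hT : ∀ i x, ⟪b i, T x⟫ = μ i * ⟪b i, x⟫)
    (hx : ∀ t, x (t + 1) =
      x t + α • (T (x t) - r t • x t - ∑ p, (μ (s p) * ⟪b (s p), x t⟫) • b (s p)))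
    (hr0 : ∀ t, 0 ≤ α * r t) (hr1 : ∀ t, α * r t ≤ 1) {i : ι} (hi : i ∉ Set.range s)
    (hμi : 0 < α * μ i) (h0 : ⟪b i, x 0⟫ ≠ 0) (p : κ) (t : ℕ) :
    ⟪b (s p), ‖x t‖⁻¹ • x t⟫ ^ 2 ≤
      ((1 / (1 + α * μ i)) ^ 2) ^ t * (⟪b (s p), x 0⟫ / ⟪b i, x 0⟫) ^ 2 := by
  have hlow : ∀ t, ⟪b (s p), x (t + 1)⟫ = (1 - α * r t) * ⟪b (s p), x t⟫ := fun t =>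
    inner_krasulina_step_deflated hb hs hT (hx t) p
  have hlead : ∀ t, ⟪b i, x (t + 1)⟫ = (1 - α * r t + α * μ i) * ⟪b i, x t⟫ := fun t =>
    inner_krasulina_step_of_notMem_range hb hT (hx t) hi
  have hlead_ne : ∀ t, ⟪b i, x t⟫ ≠ 0 :=
    ne_zero_of_mul_recurrence hlead (fun t => by linarith [hr1 t]) h0
  exact (sq_inner_smul_inv_norm_le_sq_div (hb.1 i) (hlead_ne t) _).trans
    (sq_div_le_geometric (a := fun t => ⟪b (s p), x t⟫) (b := fun t => ⟪b i, x t⟫)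
      hμi (fun t => by linarith [hr1 t]) (fun t => by linarith [hr0 t]) hlow hlead t)

end InnerProductSpace

section Matrix

variable {n : ℕ} {C : Matrix (Fin n) (Fin n) ℝ}

theorem Matrix.IsHermitian.inner_matVec_of_matVec_eq_smul (hC : C.IsHermitian)
    {v : EuclideanSpace ℝ (Fin n)} {μ : ℝ} (hv : matVec C v = μ • v)
    (x : EuclideanSpace ℝ (Fin n)) : ⟪v, matVec C x⟫ = μ * ⟪v, x⟫ := by
  calc ⟪v, matVec C x⟫ = ⟪matVec C v, x⟫ :=
        (Matrix.isSymmetric_toEuclideanLin_iff.2 hC v x).symm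
    _ = μ * ⟪v, x⟫ := by rw [hv, real_inner_smul_left]

theorem Matrix.PosSemidef.inner_matVec_self_div_norm_sq_nonneg (hC : C.PosSemidef)
    (x : EuclideanSpace ℝ (Fin n)) : 0 ≤ ⟪x, matVec C x⟫ / ‖x‖ ^ 2 :=
  div_nonneg ((Matrix.isPositive_toEuclideanLin_iff.2 hC).inner_nonneg_right x) (sq_nonneg _)

theorem Matrix.IsHermitian.inner_matVec_self_div_norm_sq_le (hC : C.IsHermitian)
    {q : Fin n → EuclideanSpace ℝ (Fin n)} (hq : Orthonormal ℝ q) {lam : Fin n → ℝ}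
    (heig : ∀ l, matVec C (q l) = lam l • q l) {M : ℝ} (hM0 : 0 ≤ M) (hM : ∀ l, lam l ≤ M)
    (x : EuclideanSpace ℝ (Fin n)) : ⟪x, matVec C x⟫ / ‖x‖ ^ 2 ≤ M := by
  have hspan := (hq.linearIndependent.span_eq_top_of_card_eq_finrank' (by simp)).ge
  refine div_le_of_le_mul₀ (sq_nonneg _) hM0 ?_
  refine (OrthonormalBasis.mk hq hspan).inner_self_apply_le_mul_norm_sq (T := matVec C) ?_ hM x
  simpa using fun l => hC.inner_matVec_of_matVec_eq_smul (heig l)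

end Matrix

/-- Indices are 0-based: the paper's `λ_j` is `lam ⟨j - 1, _⟩`. -/
theorem krasulina_lower_coeff_decay
    {d : ℕ}
    (C : Matrix (Fin d) (Fin d) ℝ) (hCpsd : C.PosSemidef)
    (lam : Fin d → ℝ) (q : Fin d → EuclideanSpace ℝ (Fin d))
    (hq : Orthonormal ℝ q)
    (heig : ∀ l, matVec C (q l) = lam l • q l)
    (hmono : ∀ i j : Fin d, i ≤ j → lam j ≤ lam i)
    (k : ℕ) (hk1 : 1 ≤ k) (hkd : k ≤ d)
    (α : ℝ) (hα0 : 0 < α) (hα : α < 1 / lam ⟨0, by omega⟩)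
    (hlamk : 0 < lam ⟨k - 1, by omega⟩)
    (x : ℕ → EuclideanSpace ℝ (Fin d))
    (hupd : ∀ t, x (t + 1) = x t + α •
      (matVec C (x t) - (⟪x t, matVec C (x t)⟫ / ‖x t‖ ^ 2) • x t -
        ∑ p : Fin (k - 1),
          (lam (Fin.castLE (by omega) p) * ⟪q (Fin.castLE (by omega) p), x t⟫) •
            q (Fin.castLE (by omega) p)))
    (hinit : ⟪q ⟨k - 1, by omega⟩, ‖x 0‖⁻¹ • x 0⟫ ≠ 0)
    (γ : ℝ) (hγ : γ = (1 / (1 + α * lam ⟨k - 1, by omega⟩)) ^ 2) :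
    γ < 1 ∧ ∃ a₁ > (0 : ℝ), ∀ t : ℕ,
      ∑ p : Fin (k - 1), ⟪q (Fin.castLE (by omega) p), ‖x t‖⁻¹ • x t⟫ ^ 2 ≤ a₁ * γ ^ t := by
  subst hγ
  set kk : Fin d := ⟨k - 1, by omega⟩
  have hkk : kk ∉ Set.range (Fin.castLE (by omega) : Fin (k - 1) → Fin d) := by
    rintro ⟨p, hp⟩
    have := congrArg Fin.val hp
    simp [kk] at this
    omega
  have hlam0 : 0 < lam ⟨0, by omega⟩ := hlamk.trans_le (hmono _ _ (Nat.zero_le _))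
  have hray_le : ∀ t, α * (⟪x t, matVec C (x t)⟫ / ‖x t‖ ^ 2) ≤ 1 := fun t =>
    (mul_le_mul_of_nonneg_left (hCpsd.1.inner_matVec_self_div_norm_sq_le hq heig hlam0.le
      (fun l => hmono _ l (Nat.zero_le _)) (x t)) hα0.le).trans ((lt_div_iff₀ hlam0).1 hα).le
  have hdecay :=
    sq_inner_normalize_krasulina_le (r := fun t => ⟪x t, matVec C (x t)⟫ / ‖x t‖ ^ 2) hq
      (Fin.castLE_injective _) (fun l => hCpsd.1.inner_matVec_of_matVec_eq_smul (heig l)) hupd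
      (fun t => mul_nonneg hα0.le (hCpsd.inner_matVec_self_div_norm_sq_nonneg (x t))) hray_le
      hkk (mul_pos hα0 hlamk) (fun h => hinit (by rw [real_inner_smul_right, h, mul_zero]))
  refine ⟨?_, exists_pos_sum_le_mul_pow (by positivity) (fun _ => sq_nonneg _) hdecay⟩
  exact pow_lt_one₀ (by positivity)
    ((div_lt_one (by positivity)).2 (by linarith [mul_pos hα0 hlamk])) two_ne_zero
end

section
/- Suppose 0 < α < 1/λ₁, λ_k > λ_{k+1}, z_k^(0) ≠ 0 and ‖x^(0)‖ = 1. Then there exists a constant a₂ > 0 such that for all t ≥ 0, Σ_{l=k+1}^{d} (z_l^(t))² ≤ a₂ ρ_k^t, where ρ_k = ((1 + αλ_{k+1})/(1 + αλ_k))² < 1. In particular the higher-order coefficients z_{k+1}^(t), ..., z_d^(t) of the normalized generalized Krasulina iterate converge to 0 at a linear rate. -/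
/-!
For every index `l ≥ k - 1` (0-based) the deflation term is orthogonal to `q l`, so one step
multiplies the coefficient `⟪q l, x⟫` by `1 + α (λ_l - β)`, where `β ∈ [0, λ₁]` is the Rayleigh
quotient of the current iterate; `α λ₁ < 1` makes these factors positive. Because `β ≥ 0`, the
ratio of the factor of an index `l ≥ k` to the factor of the pivot `k - 1` is at most
`(1 + α λ_k) / (1 + α λ_{k-1})`, so `(⟪q l, x⟫ / ⟪q (k-1), x⟫)²` decays like `ρ ^ t`. Finally
`⟪q (k-1), x⟫² ≤ ‖x‖²` turns this into decay of the normalized coefficients.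
-/

set_option autoImplicit false

open scoped RealInnerProductSpace

theorem one_add_mul_sub_sq_le {α c μ a b : ℝ} (hα : 0 < α) (hc : 0 ≤ c) (hμa : μ ≤ a)
    (hab : a ≤ b) (hb : 0 < 1 + α * b) (hμc : 0 ≤ 1 + α * (μ - c)) :
    (1 + α * (μ - c)) ^ 2 ≤ ((1 + α * a) / (1 + α * b)) ^ 2 * (1 + α * (b - c)) ^ 2 := by
  -- the ratio `(1 + α (μ - c)) / (1 + α (b - c))` decreases in `c` since `μ ≤ b`
  have hlin : (1 + α * (μ - c)) * (1 + α * b) ≤ (1 + α * a) * (1 + α * (b - c)) := by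
    nlinarith [mul_nonneg hα.le (sub_nonneg.2 hμa),
      mul_nonneg (mul_nonneg hα.le hc) (mul_nonneg hα.le (sub_nonneg.2 hab))]
  rw [div_pow, div_mul_eq_mul_div, le_div_iff₀ (by positivity), ← mul_pow, ← mul_pow]
  exact pow_le_pow_left₀ (mul_nonneg hμc hb.le) hlin 2

theorem one_add_mul_div_one_add_mul_sq_lt_one {α μ ν : ℝ} (hα : 0 < α) (hμ : 0 ≤ μ)
    (hμν : μ < ν) : ((1 + α * μ) / (1 + α * ν)) ^ 2 < 1 := by
  have hμ' : 0 < 1 + α * μ := by nlinarith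
  have hμν' : 1 + α * μ < 1 + α * ν := by nlinarith
  exact pow_lt_one₀ (div_pos hμ' (hμ'.trans hμν')).le ((div_lt_one (hμ'.trans hμν')).2 hμν')
    two_ne_zero

theorem sq_mul_sq_le_pow_mul_of_sq_le {u v f g : ℕ → ℝ} {ρ : ℝ}
    (hu : ∀ t, u (t + 1) = f t * u t) (hv : ∀ t, v (t + 1) = g t * v t)
    (hfg : ∀ t, f t ^ 2 ≤ ρ * g t ^ 2) (t : ℕ) :
    u t ^ 2 * v 0 ^ 2 ≤ ρ ^ t * (u 0 ^ 2 * v t ^ 2) := by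
  induction t with
  | zero => simp
  | succ t ih =>
    rw [hu, hv]
    calc (f t * u t) ^ 2 * v 0 ^ 2 = f t ^ 2 * (u t ^ 2 * v 0 ^ 2) := by ring
      _ ≤ (ρ * g t ^ 2) * (ρ ^ t * (u 0 ^ 2 * v t ^ 2)) :=
        mul_le_mul (hfg t) ih (by positivity) ((sq_nonneg _).trans (hfg t))
      _ = ρ ^ (t + 1) * (u 0 ^ 2 * (g t * v t) ^ 2) := by ring

section Krasulina

variable {ι E : Type*} [NormedAddCommGroup E] [InnerProductSpace ℝ E]

noncomputable def krasulinaStep (T : E →ₗ[ℝ] E) (α : ℝ) (x w : E) : E :=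
  x + α • (T x - (⟪x, T x⟫ / ‖x‖ ^ 2) • x - w)

theorem Orthonormal.inner_sum_smul_eq_zero {κ : Type*} [Fintype κ] {v : ι → E}
    (hv : Orthonormal ℝ v) {f : κ → ι} {i : ι} (hf : ∀ p, f p ≠ i) (c : κ → ℝ) :
    ⟪v i, ∑ p, c p • v (f p)⟫ = 0 := by
  simp only [inner_sum, real_inner_smul_right, hv.2 (hf _).symm, mul_zero, Finset.sum_const_zero]

theorem inner_smul_inv_norm_sq (u x : E) : ⟪u, ‖x‖⁻¹ • x⟫ ^ 2 = ⟪u, x⟫ ^ 2 / ‖x‖ ^ 2 := by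
  rw [real_inner_smul_right]
  ring

variable [Fintype ι] (b : OrthonormalBasis ι ℝ E) {T : E →ₗ[ℝ] E} {lam : ι → ℝ}

theorem OrthonormalBasis.inner_sq_le_norm_sq (i : ι) (x : E) : ⟪b i, x⟫ ^ 2 ≤ ‖x‖ ^ 2 := by
  have h := abs_real_inner_le_norm (b i) x
  rw [b.norm_eq_one, one_mul] at h
  exact sq_le_sq' (neg_le_of_abs_le h) (le_of_abs_le h)

theorem OrthonormalBasis.inner_apply_eq_mul_inner (hT : ∀ i, T (b i) = lam i • b i)
    (i : ι) (v : E) : ⟪b i, T v⟫ = lam i * ⟪b i, v⟫ := by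
  have hTv : T v = ∑ j, (lam j * ⟪b j, v⟫) • b j := by
    conv_lhs => rw [← b.sum_repr' v]
    simp only [map_sum, map_smul, hT, smul_smul, mul_comm]
  rw [hTv, b.orthonormal.inner_right_fintype]

theorem OrthonormalBasis.inner_self_apply_eq_sum (hT : ∀ i, T (b i) = lam i • b i) (v : E) :
    ⟪v, T v⟫ = ∑ i, lam i * ⟪b i, v⟫ ^ 2 := by
  rw [← b.sum_inner_mul_inner v (T v)]
  refine Finset.sum_congr rfl fun i _ => ?_
  rw [b.inner_apply_eq_mul_inner hT, real_inner_comm]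
  ring

theorem OrthonormalBasis.inner_self_apply_nonneg (hT : ∀ i, T (b i) = lam i • b i)
    (hlam : ∀ i, 0 ≤ lam i) (v : E) : 0 ≤ ⟪v, T v⟫ := by
  rw [b.inner_self_apply_eq_sum hT]
  exact Finset.sum_nonneg fun i _ => mul_nonneg (hlam i) (sq_nonneg _)

theorem OrthonormalBasis.inner_self_apply_le (hT : ∀ i, T (b i) = lam i • b i) {M : ℝ}
    (hM : ∀ i, lam i ≤ M) (v : E) : ⟪v, T v⟫ ≤ M * ‖v‖ ^ 2 := by
  rw [b.inner_self_apply_eq_sum hT, ← real_inner_self_eq_norm_sq, ← b.sum_inner_mul_inner v v,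
    Finset.mul_sum]
  refine Finset.sum_le_sum fun i _ => ?_
  rw [real_inner_comm v (b i), ← sq]
  exact mul_le_mul_of_nonneg_right (hM i) (sq_nonneg _)

theorem OrthonormalBasis.inner_krasulinaStep (hT : ∀ i, T (b i) = lam i • b i) {i : ι} {w : E}
    (hw : ⟪b i, w⟫ = 0) (α : ℝ) (x : E) :
    ⟪b i, krasulinaStep T α x w⟫ = (1 + α * (lam i - ⟪x, T x⟫ / ‖x‖ ^ 2)) * ⟪b i, x⟫ := by
  rw [krasulinaStep, inner_add_right, real_inner_smul_right, inner_sub_right, inner_sub_right,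
    real_inner_smul_right, b.inner_apply_eq_mul_inner hT, hw]
  ring

theorem OrthonormalBasis.inner_normalize_sq_mul_le_of_krasulina
    (hT : ∀ i, T (b i) = lam i • b i) (hlam : ∀ i, 0 ≤ lam i) {M α : ℝ} (hM : ∀ i, lam i ≤ M)
    (hα : 0 < α) (hαM : α * M < 1) {x w : ℕ → E}
    (hx : ∀ t, x (t + 1) = krasulinaStep T α (x t) (w t)) {i j : ι} {a : ℝ}
    (hia : lam i ≤ a) (haj : a ≤ lam j) (hwi : ∀ t, ⟪b i, w t⟫ = 0)
    (hwj : ∀ t, ⟪b j, w t⟫ = 0) (t : ℕ) :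
    ⟪b i, ‖x t‖⁻¹ • x t⟫ ^ 2 * ⟪b j, x 0⟫ ^ 2 ≤
      (((1 + α * a) / (1 + α * lam j)) ^ 2) ^ t * ⟪b i, x 0⟫ ^ 2 := by
  set β : ℕ → ℝ := fun t => ⟪x t, T (x t)⟫ / ‖x t‖ ^ 2
  have hβ0 (t : ℕ) : 0 ≤ β t := div_nonneg (b.inner_self_apply_nonneg hT hlam _) (sq_nonneg _)
  have hβM (t : ℕ) : β t ≤ M :=
    div_le_of_le_mul₀ (sq_nonneg _) ((hlam i).trans (hM i)) (b.inner_self_apply_le hT hM _)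
  have hcoeff (l : ι) (hl : ∀ t, ⟪b l, w t⟫ = 0) (t : ℕ) :
      ⟪b l, x (t + 1)⟫ = (1 + α * (lam l - β t)) * ⟪b l, x t⟫ := by
    rw [hx, b.inner_krasulinaStep hT (hl t)]
  have hfactor (t : ℕ) : (1 + α * (lam i - β t)) ^ 2 ≤
      ((1 + α * a) / (1 + α * lam j)) ^ 2 * (1 + α * (lam j - β t)) ^ 2 :=
    one_add_mul_sub_sq_le hα (hβ0 t) hia haj (by nlinarith [hlam j])
      (by nlinarith [hlam i, hβM t])
  have hdecay := sq_mul_sq_le_pow_mul_of_sq_le (u := fun t => ⟪b i, x t⟫)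
    (v := fun t => ⟪b j, x t⟫) (hcoeff i hwi) (hcoeff j hwj) hfactor t
  rw [inner_smul_inv_norm_sq, div_mul_eq_mul_div]
  refine div_le_of_le_mul₀ (sq_nonneg _) (by positivity) (hdecay.trans ?_)
  rw [mul_assoc]
  exact mul_le_mul_of_nonneg_left
    (mul_le_mul_of_nonneg_left (b.inner_sq_le_norm_sq j (x t)) (sq_nonneg _)) (by positivity)

theorem OrthonormalBasis.sum_inner_normalize_sq_le_of_krasulina
    (hT : ∀ i, T (b i) = lam i • b i) (hlam : ∀ i, 0 ≤ lam i) {M α : ℝ} (hM : ∀ i, lam i ≤ M)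
    (hα : 0 < α) (hαM : α * M < 1) {x w : ℕ → E}
    (hx : ∀ t, x (t + 1) = krasulinaStep T α (x t) (w t)) {s : Finset ι} {j : ι} {a : ℝ}
    (hs : ∀ i ∈ s, lam i ≤ a ∧ ∀ t, ⟪b i, w t⟫ = 0) (haj : a ≤ lam j)
    (hwj : ∀ t, ⟪b j, w t⟫ = 0) (hj0 : ⟪b j, x 0⟫ ≠ 0) (t : ℕ) :
    ∑ i ∈ s, ⟪b i, ‖x t‖⁻¹ • x t⟫ ^ 2 ≤
      ‖x 0‖ ^ 2 / ⟪b j, x 0⟫ ^ 2 * (((1 + α * a) / (1 + α * lam j)) ^ 2) ^ t := by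
  rw [div_mul_eq_mul_div, le_div_iff₀ (pow_two_pos_of_ne_zero hj0), Finset.sum_mul]
  calc _ ≤ ∑ i ∈ s, (((1 + α * a) / (1 + α * lam j)) ^ 2) ^ t * ⟪b i, x 0⟫ ^ 2 :=
        Finset.sum_le_sum fun i hi => b.inner_normalize_sq_mul_le_of_krasulina hT hlam hM hα hαM
          hx (hs i hi).1 haj (hs i hi).2 hwj t
    _ ≤ (((1 + α * a) / (1 + α * lam j)) ^ 2) ^ t * ‖x 0‖ ^ 2 := by
        rw [← Finset.mul_sum]
        exact mul_le_mul_of_nonneg_left (by simpa using b.orthonormal.sum_inner_products_le (x 0))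
          (by positivity)
    _ = _ := mul_comm _ _

end Krasulina

/-- Indices are 0-based: the 1-based eigenvalue `λ_j` is `lam ⟨j-1, _⟩`, so the 1-based
range `l ∈ {k+1, …, d}` corresponds to the 0-based indices `l` with `k ≤ (l : ℕ)`. -/
theorem krasulina_upper_coeff_decay
    {d : ℕ}
    (C : Matrix (Fin d) (Fin d) ℝ)
    (lam : Fin d → ℝ) (q : Fin d → EuclideanSpace ℝ (Fin d))
    (hq : Orthonormal ℝ q)
    (heig : ∀ l, matVec C (q l) = lam l • q l)
    (hmono : ∀ i j : Fin d, i ≤ j → lam j ≤ lam i)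
    (hnn : ∀ l, 0 ≤ lam l)
    (k : ℕ) (hkd : k < d)
    (α : ℝ) (hα0 : 0 < α) (hα : α < 1 / lam ⟨0, by omega⟩)
    (hgap : lam ⟨k, by omega⟩ < lam ⟨k - 1, by omega⟩)
    (x : ℕ → EuclideanSpace ℝ (Fin d))
    (hupd : ∀ t, x (t + 1) = x t + α •
      (matVec C (x t) - (⟪x t, matVec C (x t)⟫ / ‖x t‖ ^ 2) • x t -
        ∑ p : Fin (k - 1),
          (lam (Fin.castLE (by omega) p) * ⟪q (Fin.castLE (by omega) p), x t⟫) •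
            q (Fin.castLE (by omega) p)))
    (hinit : ⟪q ⟨k - 1, by omega⟩, ‖x 0‖⁻¹ • x 0⟫ ≠ 0)
    (ρ : ℝ) (hρ : ρ = ((1 + α * lam ⟨k, by omega⟩) / (1 + α * lam ⟨k - 1, by omega⟩)) ^ 2) :
    ρ < 1 ∧ ∃ a₂ > (0 : ℝ), ∀ t : ℕ,
      ∑ l ∈ Finset.univ.filter (fun l : Fin d => k ≤ (l : ℕ)),
        ⟪q l, ‖x t‖⁻¹ • x t⟫ ^ 2 ≤ a₂ * ρ ^ t := by
  obtain ⟨b, rfl⟩ : ∃ b : OrthonormalBasis (Fin d) ℝ (EuclideanSpace ℝ (Fin d)), ⇑b = q :=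
    ⟨.mk hq (hq.linearIndependent.span_eq_top_of_card_eq_finrank' (by simp)).ge,
      OrthonormalBasis.coe_mk _ _⟩
  set P : Fin d := ⟨k - 1, by omega⟩
  set K : Fin d := ⟨k, by omega⟩
  have hαlam : α * lam ⟨0, by omega⟩ < 1 := by
    rcases (hnn ⟨0, by omega⟩).eq_or_lt with h | h
    · simp [← h]
    · rwa [lt_div_iff₀ h] at hα
  have hP0 : ⟪b P, x 0⟫ ≠ 0 := right_ne_zero_of_mul (by rwa [← real_inner_smul_right])
  have hx0 : x 0 ≠ 0 := fun h => hP0 (by rw [h, inner_zero_right])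
  have hdeflation (l : Fin d) (hl : k - 1 ≤ (l : ℕ)) (t : ℕ) :
      ⟪b l, ∑ p : Fin (k - 1), (lam (Fin.castLE (by omega) p) *
        ⟪b (Fin.castLE (by omega) p), x t⟫) • b (Fin.castLE (by omega) p)⟫ = 0 :=
    b.orthonormal.inner_sum_smul_eq_zero (fun p h => by simp [Fin.ext_iff] at h; omega) _
  refine ⟨hρ ▸ one_add_mul_div_one_add_mul_sq_lt_one hα0 (hnn K) hgap, ‖x 0‖ ^ 2 / ⟪b P, x 0⟫ ^ 2,
    div_pos (pow_pos (norm_pos_iff.2 hx0) 2) (pow_two_pos_of_ne_zero hP0), fun t => ?_⟩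
  -- `Matrix.toLpLin 2 2 C` applied to `v` unfolds to `matVec C v`
  exact hρ ▸ b.sum_inner_normalize_sq_le_of_krasulina (T := Matrix.toLpLin 2 2 C) heig hnn
    (fun i => hmono _ i (Nat.zero_le _)) hα0 hαlam hupd
    (fun l hl => ⟨hmono K l (Finset.mem_filter.1 hl).2,
      hdeflation l ((Nat.sub_le k 1).trans (Finset.mem_filter.1 hl).2)⟩)
    (hmono P K (Nat.sub_le k 1)) (hdeflation P le_rfl) hP0 t
end

section
/- The Krasulina pseudo-gradient map h is Lipschitz continuous with Lipschitz constant L₁ = 6λ₁ on the set of nonzero vectors: for all nonzero v₁, v₂ ∈ ℝ^d, ‖h(v₁) − h(v₂)‖ ≤ 6λ₁ ‖v₁ − v₂‖. -/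
set_option autoImplicit false

open scoped RealInnerProductSpace

/-!
With `R` the Rayleigh quotient of `T` and `h v = T v - R v • v`, write
`h v - h w = (T - R v) (v - w) - (R v - R w) • w`.
Since `|R| ≤ ‖T‖`, the first term is at most `2 ‖T‖ ‖v - w‖`. The quotient `R` is scale invariant,
so `R v - R w` is the difference of the quadratic form `⟪T u, u⟫` at the unit vectors `v / ‖v‖`
and `w / ‖w‖`, at most `2 ‖T‖` times their distance; and that distance times `‖w‖` is at most
`2 ‖v - w‖`. Altogether `‖h v - h w‖ ≤ 6 ‖T‖ ‖v - w‖`.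
-/

section Normalize

variable {E : Type*} [NormedAddCommGroup E] [NormedSpace ℝ E]

theorem norm_inv_norm_smul_le_one (x : E) : ‖‖x‖⁻¹ • x‖ ≤ 1 := by
  rw [norm_smul, norm_inv, norm_norm, inv_mul_eq_div]
  exact div_self_le_one _

theorem norm_smul_inv_norm_smul (x : E) : ‖x‖ • ‖x‖⁻¹ • x = x := by
  rcases eq_or_ne x 0 with rfl | hx
  · simp
  · rw [smul_smul, mul_inv_cancel₀ (norm_ne_zero_iff.mpr hx), one_smul]

theorem norm_inv_norm_smul_sub_mul_norm_le (x y : E) :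
    ‖‖x‖⁻¹ • x - ‖y‖⁻¹ • y‖ * ‖y‖ ≤ 2 * ‖x - y‖ := by
  have hsplit : ‖y‖ • (‖x‖⁻¹ • x - ‖y‖⁻¹ • y) = (x - y) + (‖y‖ - ‖x‖) • (‖x‖⁻¹ • x) := by
    rw [smul_sub, sub_smul, norm_smul_inv_norm_smul, norm_smul_inv_norm_smul]
    abel
  have hnorms : |‖y‖ - ‖x‖| ≤ ‖x - y‖ := by
    rw [norm_sub_rev]
    exact abs_norm_sub_norm_le y x
  calc ‖‖x‖⁻¹ • x - ‖y‖⁻¹ • y‖ * ‖y‖ = ‖(x - y) + (‖y‖ - ‖x‖) • (‖x‖⁻¹ • x)‖ := by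
        rw [← hsplit, norm_smul, norm_norm, mul_comm]
    _ ≤ ‖x - y‖ + |‖y‖ - ‖x‖| * ‖‖x‖⁻¹ • x‖ := by
        grw [norm_add_le, norm_smul, Real.norm_eq_abs]
    _ ≤ 2 * ‖x - y‖ := by
        grw [norm_inv_norm_smul_le_one, hnorms]
        linarith

end Normalize

namespace ContinuousLinearMap

variable {E : Type*} [NormedAddCommGroup E] [InnerProductSpace ℝ E] (T : E →L[ℝ] E)

theorem abs_inner_apply_self_sub_le (x y : E) :
    |⟪T x, x⟫ - ⟪T y, y⟫| ≤ ‖T‖ * (‖x‖ + ‖y‖) * ‖x - y‖ := by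
  have hsplit : ⟪T x, x⟫ - ⟪T y, y⟫ = ⟪T (x - y), x⟫ + ⟪T y, x - y⟫ := by
    rw [map_sub, inner_sub_left, inner_sub_right]
    ring
  rw [hsplit]
  grw [abs_add_le, abs_real_inner_le_norm, abs_real_inner_le_norm, le_opNorm, le_opNorm]
  exact le_of_eq (by ring)

theorem rayleighQuotient_eq_inner_inv_norm_smul (x : E) :
    T.rayleighQuotient x = ⟪T (‖x‖⁻¹ • x), ‖x‖⁻¹ • x⟫ := by
  rcases eq_or_ne x 0 with rfl | hx
  · simp
  · have hx' : ‖x‖ ≠ 0 := norm_ne_zero_iff.mpr hx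
    simp only [rayleighQuotient, reApplyInnerSelf_apply, map_smul, real_inner_smul_left,
      real_inner_smul_right, RCLike.re_to_real]
    field_simp

theorem abs_rayleighQuotient_sub_mul_norm_le (x y : E) :
    |T.rayleighQuotient x - T.rayleighQuotient y| * ‖y‖ ≤ 4 * ‖T‖ * ‖x - y‖ := by
  rw [rayleighQuotient_eq_inner_inv_norm_smul, rayleighQuotient_eq_inner_inv_norm_smul]
  calc _ ≤ ‖T‖ * (1 + 1) * ‖‖x‖⁻¹ • x - ‖y‖⁻¹ • y‖ * ‖y‖ := by
        grw [abs_inner_apply_self_sub_le, norm_inv_norm_smul_le_one, norm_inv_norm_smul_le_one]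
    _ ≤ ‖T‖ * (1 + 1) * (2 * ‖x - y‖) := by
        rw [mul_assoc _ ‖_‖]
        grw [norm_inv_norm_smul_sub_mul_norm_le]
    _ = 4 * ‖T‖ * ‖x - y‖ := by ring

/-- Since `rayleighQuotient T 0 = 0`, this vanishes at `0`, its continuous extension. -/
noncomputable def krasulinaPseudoGrad (v : E) : E := T v - T.rayleighQuotient v • v

theorem norm_krasulinaPseudoGrad_sub_le (x y : E) :
    ‖T.krasulinaPseudoGrad x - T.krasulinaPseudoGrad y‖ ≤ 6 * ‖T‖ * ‖x - y‖ := by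
  have hsplit : T.krasulinaPseudoGrad x - T.krasulinaPseudoGrad y =
      (T (x - y) - T.rayleighQuotient x • (x - y)) -
        (T.rayleighQuotient x - T.rayleighQuotient y) • y := by
    rw [krasulinaPseudoGrad, krasulinaPseudoGrad, map_sub]
    module
  rw [hsplit]
  grw [norm_sub_le, norm_sub_le, le_opNorm, norm_smul, norm_smul, Real.norm_eq_abs,
    Real.norm_eq_abs, rayleighQuotient_le_norm, abs_rayleighQuotient_sub_mul_norm_le]
  exact le_of_eq (by ring)

end ContinuousLinearMap

theorem krasulina_pseudograd_lipschitz_general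
    {d : ℕ}
    (C : Matrix (Fin d) (Fin d) ℝ)
    (lam1 : ℝ) (hlam1 : 0 < lam1)
    (hCnorm : ∀ v : EuclideanSpace ℝ (Fin d), ‖matVec C v‖ ≤ lam1 * ‖v‖)
    (v₁ v₂ : EuclideanSpace ℝ (Fin d)) :
    ‖(matVec C v₁ - (⟪v₁, matVec C v₁⟫ / ‖v₁‖ ^ 2) • v₁) -
        (matVec C v₂ - (⟪v₂, matVec C v₂⟫ / ‖v₂‖ ^ 2) • v₂)‖ ≤
      6 * lam1 * ‖v₁ - v₂‖ := by
  set T := Matrix.toEuclideanCLM (𝕜 := ℝ) C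
  have hT : ∀ v, matVec C v = T v := fun _ ↦ rfl
  have hR : ∀ v, ⟪v, matVec C v⟫ / ‖v‖ ^ 2 = T.rayleighQuotient v := fun v ↦ by
    rw [hT, real_inner_comm]
    rfl
  have hTnorm : ‖T‖ ≤ lam1 := T.opNorm_le_bound hlam1.le hCnorm
  calc _ = ‖T.krasulinaPseudoGrad v₁ - T.krasulinaPseudoGrad v₂‖ := by
        rw [hR, hR, hT, hT]
        rfl
    _ ≤ 6 * ‖T‖ * ‖v₁ - v₂‖ := T.norm_krasulinaPseudoGrad_sub_le v₁ v₂
    _ ≤ 6 * lam1 * ‖v₁ - v₂‖ := by gcongr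

/-- the Krasulina pseudo-gradient map `h(v) = Cv - (vᵀCv/‖v‖²)v`
is Lipschitz with constant `6λ₁` on nonzero vectors, where `‖C‖ ≤ λ₁` is the
spectral-norm bound on the symmetric PSD matrix `C`. -/
theorem krasulina_pseudograd_lipschitz
    {d : ℕ}
    (C : Matrix (Fin d) (Fin d) ℝ) (hCsymm : C.IsSymm) (hCpsd : C.PosSemidef)
    (lam1 : ℝ) (hlam1 : 0 < lam1)
    (hCnorm : ∀ v : EuclideanSpace ℝ (Fin d), ‖matVec C v‖ ≤ lam1 * ‖v‖)
    (v₁ v₂ : EuclideanSpace ℝ (Fin d)) (hv₁ : v₁ ≠ 0) (hv₂ : v₂ ≠ 0) :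
    ‖(matVec C v₁ - (⟪v₁, matVec C v₁⟫ / ‖v₁‖ ^ 2) • v₁) -
        (matVec C v₂ - (⟪v₂, matVec C v₂⟫ / ‖v₂‖ ^ 2) • v₂)‖ ≤
      6 * lam1 * ‖v₁ - v₂‖ :=
  krasulina_pseudograd_lipschitz_general C lam1 hlam1 hCnorm v₁ v₂
end

section
/- If 0 < α < ((λ_k − λ_{k+1})/((k+5)(k+6))) · ((1−β)/(9λ₁))², then the spectral radius of the 3×3 matrix P_k(α) = [[(1+β)/2 + αL_k, L_k(2+αL_k), αL_k²], [α, (1+β)/2, 0], [0, αL_k, δ_k]] is strictly less than 1, where L_k = (k+5)λ₁ and δ_k = (1+αλ_{k+1})/(1+αλ_k). -/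
/-!
Write `c = (1 + β) / 2`, `ε = 1 - c` and `g = λ_k - λ_{k+1}`. With the weights `(1, t, s)`,
`t = ε / (9 L_k)`, `s = ε / (3 g)`, every weighted absolute row sum of `P_k(α)` is smaller than
the weight of its row (Gershgorin's bound for `diag (1, t, s)⁻¹ P_k(α) diag (1, t, s)`), so the
row of an eigenvector entry of largest weighted modulus forces `|μ| < 1`. The step-size bound
enters only through `81 α L_k² < 4 g ε²`, which makes `α L_k` and `α L_k² / g` of order `ε²`,
while `δ_k = 1 - α g / (1 + α λ_k)` supplies the slack needed in the last row.
-/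

open Matrix

theorem Matrix.norm_lt_of_mem_spectrum_of_weighted_row_sum_lt
    {K n : Type*} [NormedField K] [Fintype n] [DecidableEq n]
    {A : Matrix n n K} {w : n → ℝ} {r : ℝ} (hw : ∀ i, 0 < w i)
    (hA : ∀ i, ∑ j, ‖A i j‖ * w j < r * w i) {μ : K} (hμ : μ ∈ spectrum K A) :
    ‖μ‖ < r := by
  rw [← spectrum_toLin'] at hμ
  obtain ⟨v, hv⟩ := (Module.End.HasEigenvalue.of_mem_spectrum hμ).exists_hasEigenvector
  have hAv : A *ᵥ v = μ • v := Module.End.mem_eigenspace_iff.1 hv.1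
  obtain ⟨j₀, hj₀⟩ := Function.ne_iff.1 hv.2
  have : Nonempty n := ⟨j₀⟩
  obtain ⟨i, hi⟩ := Finite.exists_max fun j ↦ ‖v j‖ / w j
  set m := ‖v i‖ / w i
  have hm : 0 < m := (div_pos (norm_pos_iff.2 hj₀) (hw j₀)).trans_le (hi j₀)
  have hvi : ‖v i‖ = m * w i := by simp only [m, div_mul_cancel₀ _ (hw i).ne']
  have hv_le : ∀ j, ‖v j‖ ≤ m * w j := fun j ↦ (div_le_iff₀ (hw j)).1 (hi j)
  have hμv : ‖μ‖ * ‖v i‖ < r * ‖v i‖ :=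
    calc ‖μ‖ * ‖v i‖ = ‖∑ j, A i j * v j‖ := by
          rw [← norm_mul, ← smul_eq_mul, ← Pi.smul_apply, ← hAv]; rfl
      _ ≤ ∑ j, ‖A i j‖ * (m * w j) :=
          (norm_sum_le _ _).trans <| Finset.sum_le_sum fun j _ ↦ by
            rw [norm_mul]; gcongr; exact hv_le j
      _ = m * ∑ j, ‖A i j‖ * w j := by rw [Finset.mul_sum]; simp only [mul_left_comm]
      _ < m * (r * w i) := mul_lt_mul_of_pos_left (hA i) hm
      _ = r * ‖v i‖ := by rw [hvi]; ring
  exact lt_of_mul_lt_mul_right hμv (norm_nonneg _)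

theorem Matrix.norm_lt_one_of_mem_spectrum_map_ofReal_fin_three
    {A : Matrix (Fin 3) (Fin 3) ℝ} {t s : ℝ} (ht : 0 < t) (hs : 0 < s)
    (h₀ : |A 0 0| + |A 0 1| * t + |A 0 2| * s < 1)
    (h₁ : |A 1 0| + |A 1 1| * t + |A 1 2| * s < t)
    (h₂ : |A 2 0| + |A 2 1| * t + |A 2 2| * s < s)
    {μ : ℂ} (hμ : μ ∈ spectrum ℂ (A.map Complex.ofReal)) : ‖μ‖ < 1 := by
  refine norm_lt_of_mem_spectrum_of_weighted_row_sum_lt (w := ![1, t, s]) ?_ ?_ hμ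
  · intro i; fin_cases i <;> simp [ht, hs]
  · intro i; fin_cases i <;> simpa [Fin.sum_univ_three]

theorem norm_lt_one_of_mem_spectrum_P {c α L lamk lamk1 : ℝ}
    (hc₀ : 1 / 2 ≤ c) (hc₁ : c < 1) (hα : 0 < α)
    (hlamk1 : 0 ≤ lamk1) (hgap : lamk1 < lamk) (hlamkL : lamk ≤ L)
    (hstep : 81 * α * L ^ 2 < 4 * (lamk - lamk1) * (1 - c) ^ 2) :
    ∀ μ ∈ spectrum ℂ
      ((!![c + α * L, L * (2 + α * L), α * L ^ 2;
           α, c, 0;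
           0, α * L, (1 + α * lamk1) / (1 + α * lamk)]).map Complex.ofReal),
      ‖μ‖ < 1 := by
  intro μ hμ
  set ε := 1 - c with hε
  set g := lamk - lamk1
  have hε₀ : 0 < ε := by linarith
  have hg₀ : 0 < g := by linarith
  have hL : 0 < L := by linarith
  have hgL : g ≤ L := by linarith
  have hαL : 81 * (α * L) < 4 * ε ^ 2 := by nlinarith
  have hαL2 : 81 * (α * L ^ 2 / g) < 4 * ε ^ 2 := by
    rw [← mul_div_assoc, div_lt_iff₀ hg₀]; nlinarith
  have hden : 0 < 1 + α * lamk := by nlinarith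
  refine norm_lt_one_of_mem_spectrum_map_ofReal_fin_three (t := ε / (9 * L)) (s := ε / (3 * g))
    (by positivity) (by positivity) ?row₀ ?row₁ ?row₂ hμ
  all_goals simp only [of_apply, cons_val', cons_val_zero, cons_val_one, cons_val,
    cons_val_fin_one, abs_zero, zero_mul, zero_add, add_zero]
  case row₀ =>
    rw [abs_of_pos (by positivity), abs_of_pos (by positivity), abs_of_pos (by positivity)]
    have e₁ : L * (2 + α * L) * (ε / (9 * L)) = (2 + α * L) * ε / 9 := by field_simp
    have e₂ : α * L ^ 2 * (ε / (3 * g)) = α * L ^ 2 / g * ε / 3 := by field_simp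
    rw [e₁, e₂]
    nlinarith [mul_lt_mul_of_pos_right hαL hε₀, mul_lt_mul_of_pos_right hαL2 hε₀]
  case row₁ =>
    rw [abs_of_pos hα, abs_of_pos (by positivity)]
    have : α < ε * (ε / (9 * L)) := by
      rw [← mul_div_assoc, lt_div_iff₀ (by positivity)]; nlinarith
    linear_combination this + ε / (9 * L) * hε
  case row₂ =>
    rw [abs_of_pos (by positivity), abs_of_pos (by positivity)]
    have e₁ : α * L * (ε / (9 * L)) = α * ε / 9 := by field_simp
    have e₂ : (1 + α * lamk1) / (1 + α * lamk) * (ε / (3 * g))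
        = ε / (3 * g) - α * ε / (3 * (1 + α * lamk)) := by
      field_simp; ring
    have : α * ε / 9 < α * ε / (3 * (1 + α * lamk)) :=
      div_lt_div_of_pos_left (by positivity) (by positivity) (by nlinarith)
    linarith

theorem spectral_radius_P_lt_one_general
    (β : ℝ) (hβ0 : 0 ≤ β) (hβ1 : β < 1)
    (k : ℕ)
    (lam1 lamk lamk1 : ℝ) (hord1 : lamk ≤ lam1) (hgap : lamk1 < lamk)
    (hnn : 0 ≤ lamk1) (hlam1 : 0 < lam1)
    (α : ℝ) (hα0 : 0 < α)
    (L : ℝ) (hL : L = ((k : ℝ) + 5) * lam1)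
    (δ : ℝ) (hδ : δ = (1 + α * lamk1) / (1 + α * lamk))
    (hα : α < (lamk - lamk1) / (((k : ℝ) + 5) * ((k : ℝ) + 6)) * ((1 - β) / (9 * lam1)) ^ 2) :
    ∀ μ ∈ spectrum ℂ
      ((!![(1 + β) / 2 + α * L, L * (2 + α * L), α * L ^ 2;
           α, (1 + β) / 2, 0;
           0, α * L, δ]).map (Complex.ofReal)),
      ‖μ‖ < 1 := by
  subst hL hδ
  have hk₅ : (1 : ℝ) ≤ k + 5 := by linarith [k.cast_nonneg (α := ℝ)]
  have hlamkL : lamk ≤ (k + 5) * lam1 := hord1.trans (le_mul_of_one_le_left hlam1.le hk₅)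
  refine norm_lt_one_of_mem_spectrum_P (by linarith) (by linarith) hα0 hnn hgap hlamkL ?_
  calc 81 * α * ((k + 5) * lam1) ^ 2
      ≤ 81 * α * ((k + 5) * (k + 6) * lam1 ^ 2) := by gcongr; nlinarith
    _ < 81 * ((lamk - lamk1) / ((k + 5) * (k + 6)) * ((1 - β) / (9 * lam1)) ^ 2)
          * ((k + 5) * (k + 6) * lam1 ^ 2) := by gcongr
    _ = 4 * (lamk - lamk1) * (1 - (1 + β) / 2) ^ 2 := by field_simp; ring

/-- if `0 < α < ((λ_k − λ_{k+1})/((k+5)(k+6))) ((1−β)/(9λ₁))²`, then the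
spectral radius of the 3×3 matrix `P_k(α)` is strictly less than 1, i.e. every complex
eigenvalue of `P_k(α)` has modulus less than 1.  Here `L_k = (k+5)λ₁` and
`δ_k = (1+αλ_{k+1})/(1+αλ_k)`. -/
theorem spectral_radius_P_lt_one
    (β : ℝ) (hβ0 : 0 ≤ β) (hβ1 : β < 1)
    (k : ℕ) (hk : 1 ≤ k)
    (lam1 lamk lamk1 : ℝ) (hord1 : lamk ≤ lam1) (hgap : lamk1 < lamk)
    (hnn : 0 ≤ lamk1) (hlam1 : 0 < lam1)
    (α : ℝ) (hα0 : 0 < α)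
    (L : ℝ) (hL : L = ((k : ℝ) + 5) * lam1)
    (δ : ℝ) (hδ : δ = (1 + α * lamk1) / (1 + α * lamk))
    (hα : α < (lamk - lamk1) / (((k : ℝ) + 5) * ((k : ℝ) + 6)) * ((1 - β) / (9 * lam1)) ^ 2) :
    ∀ μ ∈ spectrum ℂ
      ((!![(1 + β) / 2 + α * L, L * (2 + α * L), α * L ^ 2;
           α, (1 + β) / 2, 0;
           0, α * L, δ]).map (Complex.ofReal)),
      ‖μ‖ < 1 :=
  spectral_radius_P_lt_one_general β hβ0 hβ1 k lam1 lamk lamk1 hord1 hgap hnn hlam1 α hα0 L hL δ hδ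
    hα
end

section
/- Fix t ≥ 1 and suppose that the averages of the tracking variables satisfy (1/M)Σ_{i=1}^M s_i^(t−1) = g^(t−1). Then the gradient-tracking error satisfies the recursion (Σ_{i=1}^M ‖s_i^(t) − g^(t)‖²)^{1/2} ≤ ((1+β)/2) (Σ_{i=1}^M ‖s_i^(t−1) − g^(t−1)‖²)^{1/2} + L₁ (Σ_{i=1}^M ‖x_i^(t) − x_i^(t−1)‖²)^{1/2}, where L₁ = 6λ₁. -/
/-!
Write `e_i = s_i^(t-1) - g^(t-1)` and `Δ_i = h_i(x_i^(t)) - h_i(x_i^(t-1))`. Because the rows of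
`W` sum to one, the new tracking error is `((I + W) / 2) e + (Δ - mean Δ)`. The averaging
hypothesis makes every coordinate column of `e` orthogonal to `𝟙`, where the symmetric matrix
`(I + W) / 2` has norm at most `(1 + β) / 2`; centring `Δ` does not increase its `ℓ²` norm; and
each `h_i` is `6 λ₁`-Lipschitz on nonzero vectors, because `0 ≤ C_i ≤ C` forces `‖C_i‖ ≤ λ₁`.
Minkowski's inequality adds the two bounds.
-/

set_option autoImplicit false

open scoped RealInnerProductSpace

/-- The local Krasulina pseudo-gradient `h_i(v) = C_i v − (vᵀC_i v/‖v‖²) v`. -/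
noncomputable def pgrad {d : ℕ} (A : Matrix (Fin d) (Fin d) ℝ)
    (v : EuclideanSpace ℝ (Fin d)) : EuclideanSpace ℝ (Fin d) :=
  matVec A v - (⟪v, matVec A v⟫ / ‖v‖ ^ 2) • v

open NormedSpace

section Operators

variable {E : Type*} [NormedAddCommGroup E] [InnerProductSpace ℝ E]

theorem Orthonormal.exists_orthonormalBasis_of_card_eq_finrank {ι : Type*} [Fintype ι]
    [FiniteDimensional ℝ E] {u : ι → E} (hu : Orthonormal ℝ u)
    (hcard : Fintype.card ι = Module.finrank ℝ E) :
    ∃ b : OrthonormalBasis ι ℝ E, ⇑b = u :=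
  ⟨.mk hu (hu.linearIndependent.span_eq_top_of_card_eq_finrank' hcard).ge, by simp⟩

namespace LinearMap.IsSymmetric

variable {ι : Type*} [Fintype ι] {T : E →ₗ[ℝ] E} (hT : T.IsSymmetric)
  (b : OrthonormalBasis ι ℝ E) {ν : ι → ℝ} (hb : ∀ i, T (b i) = ν i • b i)
include hT hb

theorem inner_eigenbasis_apply (i : ι) (v : E) : ⟪b i, T v⟫ = ν i * ⟪b i, v⟫ := by
  rw [← hT, hb, real_inner_smul_left]

theorem norm_apply_le_of_eigenbasis {γ : ℝ} (hγ : 0 ≤ γ) {v : E}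
    (hv : ∀ i, ⟪b i, v⟫ ≠ 0 → |ν i| ≤ γ) : ‖T v‖ ≤ γ * ‖v‖ := by
  refine le_of_sq_le_sq ?_ (by positivity)
  rw [mul_pow, ← b.sum_sq_inner_right, ← b.sum_sq_inner_right, Finset.mul_sum]
  refine Finset.sum_le_sum fun i _ => ?_
  rw [inner_eigenbasis_apply hT b hb, mul_pow]
  by_cases hi : ⟪b i, v⟫ = 0
  · simp [hi]
  · exact mul_le_mul_of_nonneg_right
      (sq_le_sq.mpr (by rw [abs_of_nonneg hγ]; exact hv i hi)) (sq_nonneg _)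

theorem inner_eq_zero_of_eigenvalue_simple {i₀ : ι} (hsimple : ∀ j ≠ i₀, ν j ≠ ν i₀)
    {w : E} (hw : T w = ν i₀ • w) (hw0 : w ≠ 0) {v : E} (hwv : ⟪w, v⟫ = 0) :
    ⟪b i₀, v⟫ = 0 := by
  have horth : ∀ j ≠ i₀, ⟪b j, w⟫ = 0 := fun j hj => by
    have h := inner_eigenbasis_apply hT b hb j w
    rw [hw, real_inner_smul_right] at h
    exact (mul_eq_zero.mp (by linarith : (ν i₀ - ν j) * ⟪b j, w⟫ = 0)).resolve_left
      (sub_ne_zero.mpr (hsimple j hj).symm)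
  have hw_eq : w = ⟪b i₀, w⟫ • b i₀ := by
    conv_lhs => rw [← b.sum_repr' w]
    exact Finset.sum_eq_single i₀ (fun j _ hj => by rw [horth j hj, zero_smul]) (by simp)
  have hcoef : ⟪b i₀, w⟫ ≠ 0 := fun h => hw0 (by rw [hw_eq, h, zero_smul])
  rw [hw_eq, real_inner_smul_left] at hwv
  exact (mul_eq_zero.mp hwv).resolve_left hcoef

end LinearMap.IsSymmetric

theorem LinearMap.IsPositive.norm_apply_le {T : E →ₗ[ℝ] E} (hT : T.IsPositive) {L : ℝ}
    (hL0 : 0 ≤ L) (hL : ∀ v, ⟪v, T v⟫ ≤ L * ‖v‖ ^ 2) (v : E) : ‖T v‖ ≤ L * ‖v‖ := by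
  have hCS : ⟪T v, T v⟫ * ⟪v, T (T v)⟫ ≤ ⟪T v, T (T v)⟫ * ⟪v, T v⟫ :=
    LinearMap.BilinForm.apply_mul_apply_le_of_forall_zero_le ((innerₗ E).compl₂ T)
      hT.inner_nonneg_right (T v) v
  rw [← hT.isSymmetric v (T v), real_inner_self_eq_norm_sq] at hCS
  have hquad := hCS.trans (mul_le_mul (hL (T v)) (hL v) (hT.inner_nonneg_right v)
    (by positivity))
  by_contra! h
  have hsq : (L * ‖v‖) ^ 2 < ‖T v‖ ^ 2 := pow_lt_pow_left₀ h (by positivity) two_ne_zero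
  nlinarith [(sq_nonneg (L * ‖v‖)).trans_lt hsq]

theorem LinearMap.IsPositive.norm_apply_le_of_sum {ι : Type*} [Fintype ι]
    {T : ι → E →ₗ[ℝ] E} (hT : ∀ i, (T i).IsPositive) {L : ℝ} (hL0 : 0 ≤ L)
    (hsum : ∀ v, ‖(∑ i, T i) v‖ ≤ L * ‖v‖) (i : ι) (v : E) : ‖T i v‖ ≤ L * ‖v‖ := by
  refine (hT i).norm_apply_le hL0 (fun w => ?_) v
  calc ⟪w, T i w⟫ ≤ ∑ j, ⟪w, T j w⟫ :=
        Finset.single_le_sum (fun j _ => (hT j).inner_nonneg_right w) (Finset.mem_univ i)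
    _ = ⟪w, (∑ j, T j) w⟫ := by rw [LinearMap.sum_apply, inner_sum]
    _ ≤ ‖w‖ * ‖(∑ j, T j) w‖ := real_inner_le_norm _ _
    _ ≤ ‖w‖ * (L * ‖w‖) := by gcongr; exact hsum w
    _ = L * ‖w‖ ^ 2 := by ring

end Operators

theorem Matrix.IsSymm.isSymmetric_toEuclideanLin {n : Type*} [Fintype n] [DecidableEq n]
    {A : Matrix n n ℝ} (hA : A.IsSymm) : A.toEuclideanLin.IsSymmetric :=
  Matrix.isSymmetric_toEuclideanLin_iff.2 (Matrix.isHermitian_iff_isSymm.2 hA)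

section PseudoGradient

variable {E : Type*} [NormedAddCommGroup E] [InnerProductSpace ℝ E]

theorem norm_normalize_sub_normalize_le {u v : E} (hu : u ≠ 0) (hv : v ≠ 0) :
    ‖normalize u - normalize v‖ ≤ 2 * ‖u - v‖ / ‖u‖ := by
  have hu' : 0 < ‖u‖ := norm_pos_iff.2 hu
  have hv' : 0 < ‖v‖ := norm_pos_iff.2 hv
  have hsplit : normalize u - normalize v =
      ‖u‖⁻¹ • (u - v) + ((‖v‖ - ‖u‖) / ‖u‖) • normalize v := by
    simp only [NormedSpace.normalize, smul_sub, smul_smul]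
    match_scalars
    · field_simp
    · field_simp; ring
  calc ‖normalize u - normalize v‖
      ≤ ‖u‖⁻¹ * ‖u - v‖ + |‖v‖ - ‖u‖| / ‖u‖ * ‖normalize v‖ := by
        rw [hsplit]
        refine (norm_add_le _ _).trans_eq ?_
        rw [norm_smul, norm_smul, Real.norm_eq_abs, Real.norm_eq_abs, abs_inv, abs_norm,
          abs_div, abs_norm]
    _ ≤ ‖u‖⁻¹ * ‖u - v‖ + ‖u - v‖ / ‖u‖ * 1 := by
        rw [norm_normalize hv]
        gcongr
        exact abs_norm_sub_norm_le v u |>.trans_eq (norm_sub_rev v u)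
    _ = 2 * ‖u - v‖ / ‖u‖ := by ring

variable {T : E →ₗ[ℝ] E} {L : ℝ} (hT : ∀ w, ‖T w‖ ≤ L * ‖w‖)
include hT

theorem abs_inner_apply_le (x y : E) : |⟪x, T y⟫| ≤ L * ‖x‖ * ‖y‖ :=
  calc |⟪x, T y⟫| ≤ ‖x‖ * ‖T y‖ := abs_real_inner_le_norm _ _
    _ ≤ ‖x‖ * (L * ‖y‖) := by gcongr; exact hT y
    _ = L * ‖x‖ * ‖y‖ := by ring

theorem abs_inner_apply_self_sub_le {x y : E} (hx : ‖x‖ = 1) (hy : ‖y‖ = 1) :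
    |⟪x, T x⟫ - ⟪y, T y⟫| ≤ 2 * L * ‖x - y‖ := by
  have hsplit : ⟪x, T x⟫ - ⟪y, T y⟫ = ⟪x - y, T x⟫ + ⟪y, T (x - y)⟫ := by
    rw [inner_sub_left, map_sub, inner_sub_right]; ring
  calc |⟪x, T x⟫ - ⟪y, T y⟫| ≤ |⟪x - y, T x⟫| + |⟪y, T (x - y)⟫| := hsplit ▸ abs_add_le _ _
    _ ≤ L * ‖x - y‖ * ‖x‖ + L * ‖y‖ * ‖x - y‖ :=
        add_le_add (abs_inner_apply_le hT _ _) (abs_inner_apply_le hT _ _)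
    _ = 2 * L * ‖x - y‖ := by rw [hx, hy]; ring

theorem norm_pseudoGradient_sub_le (hL0 : 0 ≤ L) {u v : E} (hu : u ≠ 0) (hv : v ≠ 0) :
    ‖(T u - ⟪normalize u, T (normalize u)⟫ • u) - (T v - ⟪normalize v, T (normalize v)⟫ • v)‖
      ≤ 6 * L * ‖u - v‖ := by
  set cu := ⟪normalize u, T (normalize u)⟫
  set cv := ⟪normalize v, T (normalize v)⟫
  have hu' : 0 < ‖u‖ := norm_pos_iff.2 hu
  have hcv : |cv| ≤ L := by
    simpa [norm_normalize hv] using abs_inner_apply_le hT (normalize v) (normalize v)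
  have hcucv : |cu - cv| * ‖u‖ ≤ 4 * L * ‖u - v‖ :=
    calc |cu - cv| * ‖u‖ ≤ 2 * L * (2 * ‖u - v‖ / ‖u‖) * ‖u‖ := by
          gcongr
          exact (abs_inner_apply_self_sub_le hT (norm_normalize hu) (norm_normalize hv)).trans
            (by gcongr; exact norm_normalize_sub_normalize_le hu hv)
      _ = 4 * L * ‖u - v‖ := by field_simp; ring
  have hsplit : (T u - cu • u) - (T v - cv • v) = T (u - v) - cv • (u - v) - (cu - cv) • u := by
    rw [map_sub]; module
  calc ‖(T u - cu • u) - (T v - cv • v)‖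
      ≤ ‖T (u - v)‖ + |cv| * ‖u - v‖ + |cu - cv| * ‖u‖ := by
        rw [hsplit, ← Real.norm_eq_abs, ← Real.norm_eq_abs, ← norm_smul, ← norm_smul]
        exact (norm_sub_le _ _).trans (add_le_add_left (norm_sub_le _ _) _)
    _ ≤ L * ‖u - v‖ + L * ‖u - v‖ + 4 * L * ‖u - v‖ := by
        gcongr
        exact hT _
    _ = 6 * L * ‖u - v‖ := by ring

end PseudoGradient

theorem pgrad_eq {n : ℕ} (A : Matrix (Fin n) (Fin n) ℝ) (v : EuclideanSpace ℝ (Fin n)) :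
    pgrad A v = A.toEuclideanLin v - ⟪normalize v, A.toEuclideanLin (normalize v)⟫ • v := by
  rw [pgrad, NormedSpace.normalize, map_smul, real_inner_smul_left, real_inner_smul_right]
  change _ = matVec A v - (‖v‖⁻¹ * (‖v‖⁻¹ * ⟪v, matVec A v⟫)) • v
  ring_nf

theorem norm_pgrad_sub_le {n : ℕ} {A : Matrix (Fin n) (Fin n) ℝ} {L : ℝ} (hL0 : 0 ≤ L)
    (hA : ∀ w, ‖A.toEuclideanLin w‖ ≤ L * ‖w‖) {u v : EuclideanSpace ℝ (Fin n)} (hu : u ≠ 0)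
    (hv : v ≠ 0) : ‖pgrad A u - pgrad A v‖ ≤ 6 * L * ‖u - v‖ := by
  simpa only [pgrad_eq] using norm_pseudoGradient_sub_le hA hL0 hu hv

section Consensus

variable {ι : Type*} [Fintype ι]

noncomputable def lazyMix {E : Type*} [AddCommGroup E] [Module ℝ E] (W : Matrix ι ι ℝ)
    (e : ι → E) (i : ι) : E :=
  (1 / 2 : ℝ) • e i + ∑ j, (W i j / 2) • e j

theorem lazyMix_sub_const {E : Type*} [AddCommGroup E] [Module ℝ E] {W : Matrix ι ι ℝ}
    (hW : ∀ i, ∑ j, W i j = 1) (e : ι → E) (g : E) (i : ι) :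
    lazyMix W (fun j => e j - g) i = lazyMix W e i - g := by
  have hg : ∑ j, (W i j / 2) • g = (1 / 2 : ℝ) • g := by
    rw [← Finset.sum_smul, ← Finset.sum_div, hW i, one_div]
  simp only [lazyMix, smul_sub, Finset.sum_sub_distrib, hg]
  module

theorem lazyMix_apply {κ : Type*} (W : Matrix ι ι ℝ) (e : ι → EuclideanSpace ℝ κ) (i : ι)
    (k : κ) : lazyMix W e i k = lazyMix W (fun j => e j k) i := by
  simp [lazyMix, WithLp.ofLp_sum]

theorem sum_norm_lazyMix_sq_le {κ : Type*} [Fintype κ] {W : Matrix ι ι ℝ} {γ : ℝ}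
    (hW : ∀ v : ι → ℝ, ∑ i, v i = 0 → ∑ i, lazyMix W v i ^ 2 ≤ γ ^ 2 * ∑ i, v i ^ 2)
    {e : ι → EuclideanSpace ℝ κ} (he : ∑ i, e i = 0) :
    ∑ i, ‖lazyMix W e i‖ ^ 2 ≤ γ ^ 2 * ∑ i, ‖e i‖ ^ 2 := by
  simp only [EuclideanSpace.real_norm_sq_eq, lazyMix_apply]
  rw [Finset.sum_comm]
  conv_rhs => rw [Finset.sum_comm, Finset.mul_sum]
  refine Finset.sum_le_sum fun k _ => hW _ ?_
  simpa [WithLp.ofLp_sum] using congrArg (· k) he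

end Consensus

theorem sum_lazyMix_sq_le {M : ℕ} {W : Matrix (Fin M) (Fin M) ℝ} (hWs : W.IsSymm)
    (hWrow : ∀ i, ∑ j, W i j = 1) {μ : Fin M → ℝ} {u : Fin M → EuclideanSpace ℝ (Fin M)}
    (hu : Orthonormal ℝ u)
    (hWeig : ∀ i, matVec W (u i) = μ i • u i) {i₀ : Fin M} (hμ₀ : μ i₀ = 1) {β : ℝ}
    (hβ0 : 0 ≤ β) (hβ : ∀ i ≠ i₀, |μ i| ≤ β) {v : Fin M → ℝ} (hv : ∑ i, v i = 0) :
    ∑ i, lazyMix W v i ^ 2 ≤ ((1 + β) / 2) ^ 2 * ∑ i, v i ^ 2 := by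
  obtain ⟨b, rfl⟩ := hu.exists_orthonormalBasis_of_card_eq_finrank (by simp)
  set P : Matrix (Fin M) (Fin M) ℝ := (2⁻¹ : ℝ) • (1 + W)
  have hP : P.toEuclideanLin.IsSymmetric :=
    ((Matrix.isSymm_one.add hWs).smul _).isSymmetric_toEuclideanLin
  have hPeig : ∀ i, P.toEuclideanLin (b i) = ((1 + μ i) / 2) • b i := fun i => by
    have h := hWeig i
    ext k
    have hk := congrArg (· k) h
    simp only [matVec, PiLp.smul_apply, smul_eq_mul] at hk
    simp [P, hk]
    ring
  have hPv : P.toEuclideanLin (WithLp.toLp 2 v) = WithLp.toLp 2 (lazyMix W v) := by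
    ext i
    simp [P, lazyMix, Matrix.mulVec, dotProduct, Finset.mul_sum, div_eq_inv_mul, mul_assoc]
  have hcoef : ∀ i, ⟪b i, WithLp.toLp 2 v⟫ ≠ 0 → |(1 + μ i) / 2| ≤ (1 + β) / 2 := by
    intro i hi
    by_cases hi₀ : i = i₀
    · rw [hi₀] at hi ⊢
      rcases le_or_gt 1 β with h1 | h1
      · rw [hμ₀, abs_of_nonneg (by norm_num)]; linarith
      -- For `β < 1` the eigenvalue `1` is simple, so `b i₀` is parallel to `𝟙`, hence `⊥ v`.
      · refine absurd (hWs.isSymmetric_toEuclideanLin.inner_eq_zero_of_eigenvalue_simple b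
          hWeig (fun j hj => ?_) (w := WithLp.toLp 2 fun _ => 1) ?_ ?_ ?_) hi
        · intro h
          linarith [hβ j hj, le_abs_self (μ j)]
        · ext k; simp [hμ₀, Matrix.mulVec, dotProduct, hWrow]
        · exact fun h => by simpa using congrArg (· i₀) h
        · simpa [PiLp.inner_apply] using hv
    · rw [abs_div, abs_two]
      linarith [abs_add_le 1 (μ i), abs_one (α := ℝ), hβ i hi₀]
  have hnorm := hP.norm_apply_le_of_eigenbasis b hPeig (by linarith) hcoef
  rw [hPv] at hnorm
  have := pow_le_pow_left₀ (norm_nonneg _) hnorm 2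
  rwa [mul_pow, EuclideanSpace.real_norm_sq_eq, EuclideanSpace.real_norm_sq_eq] at this

section SquareSums

variable {ι E : Type*} [Fintype ι] [NormedAddCommGroup E]

theorem sqrt_sum_norm_add_sq_le (f g : ι → E) :
    √(∑ i, ‖f i + g i‖ ^ 2) ≤ √(∑ i, ‖f i‖ ^ 2) + √(∑ i, ‖g i‖ ^ 2) := by
  simpa only [PiLp.norm_eq_of_L2, WithLp.ofLp_add, Pi.add_apply] using
    norm_add_le (WithLp.toLp 2 f : PiLp 2 fun _ : ι => E) (WithLp.toLp 2 g)

theorem sqrt_sum_norm_sq_le_mul {F : Type*} [NormedAddCommGroup F] {f : ι → E} {g : ι → F}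
    {c : ℝ} (hc : 0 ≤ c) (h : ∀ i, ‖f i‖ ≤ c * ‖g i‖) :
    √(∑ i, ‖f i‖ ^ 2) ≤ c * √(∑ i, ‖g i‖ ^ 2) := by
  rw [← Real.sqrt_sq hc, ← Real.sqrt_mul (sq_nonneg c), Finset.mul_sum]
  gcongr with i
  rw [← mul_pow]
  exact pow_le_pow_left₀ (norm_nonneg _) (h i) 2

theorem sum_norm_sub_mean_sq_le [InnerProductSpace ℝ E] (f : ι → E) :
    ∑ i, ‖f i - (Fintype.card ι : ℝ)⁻¹ • ∑ j, f j‖ ^ 2 ≤ ∑ i, ‖f i‖ ^ 2 := by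
  set n : ℝ := (Fintype.card ι : ℝ)
  set m := n⁻¹ • ∑ j, f j
  rcases isEmpty_or_nonempty ι with hι | hι
  · simp
  have hsum : ∑ j, f j = n • m := (smul_inv_smul₀ (by positivity) _).symm
  have hexpand : ∑ i, ‖f i - m‖ ^ 2 = ∑ i, ‖f i‖ ^ 2 - n * ‖m‖ ^ 2 := by
    simp only [norm_sub_sq_real, Finset.sum_add_distrib, Finset.sum_sub_distrib,
      ← Finset.mul_sum, ← sum_inner, hsum, real_inner_smul_left, real_inner_self_eq_norm_sq,
      Finset.sum_const, Finset.card_univ, nsmul_eq_mul]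
    ring
  rw [hexpand]
  linarith [show 0 ≤ n * ‖m‖ ^ 2 by positivity]

end SquareSums

theorem abs_le_max_of_antitone {M : ℕ} (hM : 2 ≤ M) {μ : Fin M → ℝ} (hμ : Antitone μ)
    {i : Fin M} (hi : i ≠ ⟨0, by omega⟩) :
    |μ i| ≤ max |μ ⟨1, by omega⟩| |μ ⟨M - 1, by omega⟩| := by
  set a := μ ⟨1, by omega⟩
  set z := μ ⟨M - 1, by omega⟩
  have ha : μ i ≤ a :=
    hμ (Fin.mk_le_of_le_val (Nat.one_le_iff_ne_zero.2 fun h => hi (Fin.ext h)))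
  have hz : z ≤ μ i := hμ (Fin.le_def.2 (by simp; omega))
  exact abs_le.2 ⟨by linarith [neg_abs_le z, le_max_right |a| |z|],
    by linarith [le_abs_self a, le_max_left |a| |z|]⟩

theorem norm_toEuclideanLin_apply_le_of_posSemidef_sum {d : ℕ} {ι : Type*} [Fintype ι]
    {C : ι → Matrix (Fin d) (Fin d) ℝ} (hC : ∀ i, (C i).PosSemidef) {lam : Fin d → ℝ}
    {q : Fin d → EuclideanSpace ℝ (Fin d)} (hq : Orthonormal ℝ q)
    (heig : ∀ l, matVec (∑ i, C i) (q l) = lam l • q l) {Λ : ℝ} (hΛ0 : 0 ≤ Λ)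
    (hΛ : ∀ l, |lam l| ≤ Λ) (i : ι) (w : EuclideanSpace ℝ (Fin d)) :
    ‖(C i).toEuclideanLin w‖ ≤ Λ * ‖w‖ := by
  obtain ⟨b, rfl⟩ := hq.exists_orthonormalBasis_of_card_eq_finrank (by simp)
  have hpos : ∀ i, (C i).toEuclideanLin.IsPositive :=
    fun i => Matrix.isPositive_toEuclideanLin_iff.2 (hC i)
  have hsum : (∑ i, C i).toEuclideanLin = ∑ i, (C i).toEuclideanLin := map_sum _ _ _
  refine LinearMap.IsPositive.norm_apply_le_of_sum hpos hΛ0 (fun v => ?_) i w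
  rw [← hsum]
  have hsymm : (∑ i, C i).toEuclideanLin.IsSymmetric :=
    (hsum ▸ LinearMap.isPositive_sum _ fun i _ => hpos i).isSymmetric
  exact hsymm.norm_apply_le_of_eigenbasis b heig hΛ0 fun l _ => hΛ l

theorem tracking_error_succ_eq {ι E : Type*} [Fintype ι] [AddCommGroup E] [Module ℝ E]
    {W : Matrix ι ι ℝ} (hW : ∀ i, ∑ j, W i j = 1) (c : ℝ) {s s' p p' : ι → E}
    (hs' : ∀ i, s' i = (1 / 2 : ℝ) • s i + ∑ j, (W i j / 2) • s j + p' i - p i) (i : ι) :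
    s' i - c • ∑ j, p' j =
      lazyMix W (fun j => s j - c • ∑ k, p k) i + ((p' i - p i) - c • ∑ j, (p' j - p j)) := by
  rw [lazyMix_sub_const hW, hs', lazyMix, Finset.sum_sub_distrib, smul_sub]
  abel

/-- Here `t = T + 1`, and eigenvalues are indexed from `0` in decreasing order: `λ₁ = lam ⟨0, _⟩`,
and `λ₂(W)`, `λ_M(W)` are `μ ⟨1, _⟩`, `μ ⟨M - 1, _⟩`. -/
theorem fastpca_tracking_error_recursion
    {d M : ℕ} (hd : 0 < d) (hM : 2 ≤ M)
    (Ci : Fin M → Matrix (Fin d) (Fin d) ℝ) (hCi : ∀ i, (Ci i).PosSemidef)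
    (lam : Fin d → ℝ) (q : Fin d → EuclideanSpace ℝ (Fin d))
    (hq : Orthonormal ℝ q)
    (heig : ∀ l, matVec (∑ i, Ci i) (q l) = lam l • q l)
    (hmono : ∀ i j : Fin d, i ≤ j → lam j ≤ lam i) (hnn : ∀ l, 0 ≤ lam l)
    (W : Matrix (Fin M) (Fin M) ℝ) (hWs : W.IsSymm)
    (hWrow : ∀ i, ∑ j, W i j = 1)
    (μ : Fin M → ℝ) (u : Fin M → EuclideanSpace ℝ (Fin M)) (hu : Orthonormal ℝ u)
    (hWeig : ∀ i, matVec W (u i) = μ i • u i)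
    (hμmono : ∀ i j : Fin M, i ≤ j → μ j ≤ μ i) (hμ0 : μ ⟨0, by omega⟩ = 1)
    (β : ℝ) (hβ : β = max |μ ⟨1, by omega⟩| |μ ⟨M - 1, by omega⟩|)
    (x s : ℕ → Fin M → EuclideanSpace ℝ (Fin d))
    (hxnz : ∀ t i, x t i ≠ 0)
    (hsupd : ∀ t i, s (t + 1) i =
      (1 / 2 : ℝ) • s t i + ∑ j, (W i j / 2) • s t j
        + pgrad (Ci i) (x (t + 1) i) - pgrad (Ci i) (x t i))
    (T : ℕ)
    (havg : (M : ℝ)⁻¹ • ∑ i, s T i = (M : ℝ)⁻¹ • ∑ i, pgrad (Ci i) (x T i)) :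
    Real.sqrt (∑ i, ‖s (T + 1) i - (M : ℝ)⁻¹ • ∑ j, pgrad (Ci j) (x (T + 1) j)‖ ^ 2) ≤
      (1 + β) / 2 *
          Real.sqrt (∑ i, ‖s T i - (M : ℝ)⁻¹ • ∑ j, pgrad (Ci j) (x T j)‖ ^ 2) +
        6 * lam ⟨0, hd⟩ * Real.sqrt (∑ i, ‖x (T + 1) i - x T i‖ ^ 2) := by
  set L := lam ⟨0, hd⟩
  set Δ := fun i => pgrad (Ci i) (x (T + 1) i) - pgrad (Ci i) (x T i)
  have hβ0 : 0 ≤ β := hβ ▸ (abs_nonneg _).trans (le_max_left _ _)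
  have hC := norm_toEuclideanLin_apply_le_of_posSemidef_sum hCi hq heig (hnn _) fun l => by
    rw [abs_of_nonneg (hnn l)]; exact hmono ⟨0, hd⟩ l (Fin.mk_le_of_le_val (Nat.zero_le _))
  have hΔ : ∀ i, ‖Δ i‖ ≤ 6 * L * ‖x (T + 1) i - x T i‖ :=
    fun i => norm_pgrad_sub_le (hnn _) (hC i) (hxnz _ _) (hxnz _ _)
  have he : ∑ i, (s T i - (M : ℝ)⁻¹ • ∑ j, pgrad (Ci j) (x T j)) = 0 := by
    rw [Finset.sum_sub_distrib, ← havg, Finset.sum_const, Finset.card_univ, Fintype.card_fin,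
      ← Nat.cast_smul_eq_nsmul ℝ, smul_inv_smul₀ (by positivity), sub_self]
  have hmix := sum_norm_lazyMix_sq_le (fun v hv => sum_lazyMix_sq_le hWs hWrow hu hWeig hμ0 hβ0
    (fun i hi => hβ ▸ abs_le_max_of_antitone hM hμmono hi) hv) he
  simp_rw [tracking_error_succ_eq hWrow _ (hsupd T)]
  refine (sqrt_sum_norm_add_sq_le _ _).trans (add_le_add ?_ ?_)
  · refine (Real.sqrt_le_sqrt hmix).trans_eq ?_
    rw [Real.sqrt_mul (sq_nonneg _), Real.sqrt_sq (by linarith)]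
  · have hcenter := sum_norm_sub_mean_sq_le Δ
    rw [Fintype.card_fin] at hcenter
    exact (Real.sqrt_le_sqrt hcenter).trans
      (sqrt_sum_norm_sq_le_mul (mul_nonneg (by norm_num) (hnn _)) hΔ)
end

section
/- Let q₁ be a unit eigenvector of C for its largest eigenvalue λ₁, let x₁* = c₁q₁ for any constant c₁ ≠ 0, and set L₁ = 6λ₁. At any time t with x̄^(t) ≠ 0, the stacked tracking variable satisfies the bound (Σ_{i=1}^M ‖s_i^(t)‖²)^{1/2} ≤ (Σ_{i=1}^M ‖s_i^(t) − g^(t)‖²)^{1/2} + L₁ (Σ_{i=1}^M ‖x_i^(t) − x̄^(t)‖²)^{1/2} + L₁ √M ‖x̄^(t) − x₁*‖. -/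
set_option autoImplicit false

open scoped RealInnerProductSpace

/-! For a symmetric `T` with Rayleigh quotient `ρ`, the residual `h(v) = T v - ρ(v) v` is
`6‖T‖`-Lipschitz: in `h v - h w = T (v - w) - ρ(v) (v - w) - (ρ(v) - ρ(w)) w` the first two
terms are at most `‖T‖ ‖v - w‖`, and since `ρ` only sees directions,
`|ρ v - ρ w| ‖w‖ ≤ 2‖T‖ ‖v/‖v‖ - w/‖w‖‖ ‖w‖ ≤ 4‖T‖ ‖v - w‖`. From `0 ≤ C_i ≤ C` we get
`‖C_i‖ ≤ λ₁`. As `x₁*` is an eigenvector of `C = Σ C_i`, `Σ h_i(x₁*) = 0`, so `g` is the mean of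
`h_i(x_i) - h_i(x₁*)`. In the stacked ℓ² norm `s = (s - g) + g`, averaging does not increase the
norm, so `√M ‖g‖ ≤ L₁ ‖(x_i - x₁*)_i‖ ≤ L₁ (‖(x_i - x̄)_i‖ + √M ‖x̄ - x₁*‖)`. -/

open Finset

namespace NormedSpace

variable {V : Type*} [NormedAddCommGroup V] [NormedSpace ℝ V]

lemma norm_normalize_le_one (v : V) : ‖normalize v‖ ≤ 1 := by
  rw [normalize, norm_smul, norm_inv, norm_norm]
  exact inv_mul_le_one_of_le₀ le_rfl (norm_nonneg v)

lemma norm_normalize_sub_normalize_mul_norm_le (v w : V) :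
    ‖normalize v - normalize w‖ * ‖w‖ ≤ 2 * ‖v - w‖ := by
  have hsplit : ‖w‖ • (normalize v - normalize w) = (v - w) + (‖w‖ - ‖v‖) • normalize v := by
    rw [smul_sub, sub_smul, norm_smul_normalize, norm_smul_normalize]
    abel
  calc ‖normalize v - normalize w‖ * ‖w‖ = ‖(v - w) + (‖w‖ - ‖v‖) • normalize v‖ := by
        rw [← hsplit, norm_smul, norm_norm, mul_comm]
    _ ≤ ‖v - w‖ + |‖w‖ - ‖v‖| * ‖normalize v‖ := by
        grw [norm_add_le, norm_smul, Real.norm_eq_abs]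
    _ ≤ ‖v - w‖ + ‖v - w‖ * 1 := by
        grw [norm_normalize_le_one, abs_norm_sub_norm_le, norm_sub_rev]
    _ = 2 * ‖v - w‖ := by ring

end NormedSpace

namespace ContinuousLinearMap

open NormedSpace

variable {E : Type*} [NormedAddCommGroup E] [InnerProductSpace ℝ E]

noncomputable def rayleighResidual (T : E →L[ℝ] E) (v : E) : E :=
  T v - T.rayleighQuotient v • v

lemma rayleighQuotient_eq_inner_normalize (T : E →L[ℝ] E) (v : E) :
    T.rayleighQuotient v = ⟪T (normalize v), normalize v⟫ := by
  rcases eq_or_ne v 0 with rfl | hv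
  · simp
  · calc T.rayleighQuotient v = T.rayleighQuotient (normalize v) :=
          (T.rayleigh_smul v (inv_ne_zero (norm_ne_zero_iff.mpr hv))).symm
      _ = _ := by simp [rayleighQuotient, reApplyInnerSelf_apply, norm_normalize hv]

lemma abs_rayleighQuotient_sub_le {T : E →L[ℝ] E} (hT : (T : E →ₗ[ℝ] E).IsSymmetric)
    (v w : E) :
    |T.rayleighQuotient v - T.rayleighQuotient w| ≤
      2 * ‖T‖ * ‖normalize v - normalize w‖ := by
  set a := normalize v
  set b := normalize w
  have hpolar : ⟪T a, a⟫ - ⟪T b, b⟫ = ⟪T (a + b), a - b⟫ := by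
    rw [map_add, inner_add_left, inner_sub_right, inner_sub_right, hT.apply_clm a b,
      real_inner_comm (T b) a]
    ring
  have hab : ‖a + b‖ ≤ 2 := by
    grw [norm_add_le, norm_normalize_le_one, norm_normalize_le_one]
    norm_num
  rw [rayleighQuotient_eq_inner_normalize, rayleighQuotient_eq_inner_normalize, hpolar]
  calc |⟪T (a + b), a - b⟫| ≤ ‖T‖ * ‖a + b‖ * ‖a - b‖ := by
        grw [abs_real_inner_le_norm, le_opNorm]
    _ ≤ ‖T‖ * 2 * ‖a - b‖ := by grw [hab]
    _ = 2 * ‖T‖ * ‖a - b‖ := by ring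

theorem norm_rayleighResidual_sub_le {T : E →L[ℝ] E} (hT : (T : E →ₗ[ℝ] E).IsSymmetric)
    (v w : E) :
    ‖T.rayleighResidual v - T.rayleighResidual w‖ ≤ 6 * ‖T‖ * ‖v - w‖ := by
  set ρv := T.rayleighQuotient v
  set ρw := T.rayleighQuotient w
  have hsplit : T.rayleighResidual v - T.rayleighResidual w
      = T (v - w) - ρv • (v - w) - (ρv - ρw) • w := by
    simp only [rayleighResidual, map_sub]
    module
  have h₁ : ‖T (v - w)‖ ≤ ‖T‖ * ‖v - w‖ := T.le_opNorm _
  have h₂ : ‖ρv • (v - w)‖ ≤ ‖T‖ * ‖v - w‖ := by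
    grw [norm_smul, Real.norm_eq_abs, T.rayleighQuotient_le_norm]
  have h₃ : ‖(ρv - ρw) • w‖ ≤ 4 * ‖T‖ * ‖v - w‖ :=
    calc ‖(ρv - ρw) • w‖ ≤ 2 * ‖T‖ * (‖normalize v - normalize w‖ * ‖w‖) := by
          grw [norm_smul, Real.norm_eq_abs, abs_rayleighQuotient_sub_le hT, mul_assoc]
      _ ≤ 2 * ‖T‖ * (2 * ‖v - w‖) := by grw [norm_normalize_sub_normalize_mul_norm_le]
      _ = 4 * ‖T‖ * ‖v - w‖ := by ring
  rw [hsplit]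
  grw [norm_sub_le, norm_sub_le, h₁, h₂, h₃]
  linarith

lemma rayleighResidual_eq_zero_of_apply_eq_smul {T : E →L[ℝ] E} {μ : ℝ} {v : E}
    (h : T v = μ • v) : T.rayleighResidual v = 0 := by
  rcases eq_or_ne v 0 with rfl | hv
  · simp [rayleighResidual]
  · have hρ : T.rayleighQuotient v = μ := by
      simp [rayleighQuotient, reApplyInnerSelf_apply, h, real_inner_smul_left, hv]
    simp [rayleighResidual, hρ, h]

lemma sum_rayleighResidual {ι : Type*} (s : Finset ι) (T : ι → E →L[ℝ] E) (v : E) :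
    ∑ i ∈ s, (T i).rayleighResidual v = (∑ i ∈ s, T i).rayleighResidual v := by
  simp [rayleighResidual, rayleighQuotient, reApplyInnerSelf_apply, sum_inner,
    sum_div, sum_smul, sum_sub_distrib]

lemma IsPositive.opNorm_le_of_inner_le {T : E →L[ℝ] E} (hT : T.IsPositive) {c : ℝ}
    (hc : 0 ≤ c) (h : ∀ x, ⟪T x, x⟫ ≤ c * ‖x‖ ^ 2) : ‖T‖ ≤ c := by
  rw [T.norm_eq_iSup_rayleighQuotient hT.isSymmetric]
  refine ciSup_le fun x ↦ ?_
  rw [rayleighQuotient, reApplyInnerSelf_apply, RCLike.re_to_real,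
    abs_of_nonneg (div_nonneg (hT.inner_nonneg_left x) (by positivity))]
  exact div_le_of_le_mul₀ (by positivity) hc (h x)

end ContinuousLinearMap

lemma LinearMap.inner_apply_self_le_of_eigenbasis {E ι : Type*} [NormedAddCommGroup E]
    [InnerProductSpace ℝ E] [Fintype ι] (T : E →ₗ[ℝ] E) (b : OrthonormalBasis ι ℝ E)
    {lam : ι → ℝ} (hT : ∀ l, T (b l) = lam l • b l) {c : ℝ} (hc : ∀ l, lam l ≤ c) (x : E) :
    ⟪T x, x⟫ ≤ c * ‖x‖ ^ 2 := by
  have hTx : T x = ∑ l, (lam l * ⟪b l, x⟫) • b l := by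
    conv_lhs => rw [← b.sum_repr' x]
    simp [hT, smul_smul, mul_comm]
  have hquad : ⟪T x, x⟫ = ∑ l, lam l * ⟪b l, x⟫ ^ 2 := by
    simp only [hTx, sum_inner, real_inner_smul_left]
    ring_nf
  rw [hquad, ← b.sum_sq_inner_right x, mul_sum]
  gcongr with l
  exact hc l

lemma ContinuousLinearMap.norm_le_of_sum_eigenbasis {E ι κ : Type*} [NormedAddCommGroup E]
    [InnerProductSpace ℝ E] [Fintype ι] [Fintype κ] {T : ι → E →L[ℝ] E}
    (hT : ∀ i, (T i).IsPositive) (b : OrthonormalBasis κ ℝ E) {lam : κ → ℝ}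
    (hb : ∀ l, (∑ i, T i) (b l) = lam l • b l) {c : ℝ} (hc₀ : 0 ≤ c) (hc : ∀ l, lam l ≤ c)
    (i : ι) : ‖T i‖ ≤ c := by
  refine (hT i).opNorm_le_of_inner_le hc₀ fun z ↦ ?_
  calc ⟪T i z, z⟫ ≤ ∑ j, ⟪T j z, z⟫ :=
        single_le_sum (fun j _ ↦ (hT j).inner_nonneg_left z) (mem_univ i)
    _ = ⟪(∑ j, T j) z, z⟫ := by rw [_root_.sum_apply, sum_inner]
    _ ≤ c * ‖z‖ ^ 2 :=
        LinearMap.inner_apply_self_le_of_eigenbasis (∑ j, T j).toLinearMap b hb hc z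

section Stacked

variable {ι V : Type*} [Fintype ι]

lemma sqrt_sum_norm_add_sq_le_s13 [SeminormedAddCommGroup V] (a b : ι → V) :
    √(∑ i, ‖a i + b i‖ ^ 2) ≤ √(∑ i, ‖a i‖ ^ 2) + √(∑ i, ‖b i‖ ^ 2) := by
  simpa [PiLp.norm_eq_of_L2] using
    norm_add_le (WithLp.toLp 2 a : PiLp 2 fun _ : ι ↦ V) (WithLp.toLp 2 b)

lemma sqrt_sum_sq_le_mul_sqrt_sum_sq {f g : ι → ℝ} {L : ℝ} (hL : 0 ≤ L)
    (hf : ∀ i, 0 ≤ f i) (hfg : ∀ i, f i ≤ L * g i) :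
    √(∑ i, f i ^ 2) ≤ L * √(∑ i, g i ^ 2) := by
  calc √(∑ i, f i ^ 2) ≤ √(∑ i, (L * g i) ^ 2) := by
        gcongr with i
        · exact hf i
        · exact hfg i
    _ = L * √(∑ i, g i ^ 2) := by
        simp_rw [mul_pow, ← mul_sum]
        rw [Real.sqrt_mul (sq_nonneg L), Real.sqrt_sq hL]

lemma sum_norm_mean_sq_le [SeminormedAddCommGroup V] [NormedSpace ℝ V] (y : ι → V) :
    ∑ _i : ι, ‖(Fintype.card ι : ℝ)⁻¹ • ∑ j, y j‖ ^ 2 ≤ ∑ i, ‖y i‖ ^ 2 := by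
  set m : ℝ := (Fintype.card ι : ℝ)
  have hcs : ‖∑ j, y j‖ ^ 2 ≤ m * ∑ i, ‖y i‖ ^ 2 := by
    grw [norm_sum_le]
    simpa using sq_sum_le_card_mul_sum_sq (s := univ) (f := fun i ↦ ‖y i‖)
  calc ∑ _i : ι, ‖m⁻¹ • ∑ j, y j‖ ^ 2 = m * m⁻¹ ^ 2 * ‖∑ j, y j‖ ^ 2 := by
        simp [m, norm_smul, mul_pow, mul_assoc]
    _ ≤ m * m⁻¹ ^ 2 * (m * ∑ i, ‖y i‖ ^ 2) := by gcongr
    _ = (m * m⁻¹) ^ 2 * ∑ i, ‖y i‖ ^ 2 := by ring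
    _ ≤ ∑ i, ‖y i‖ ^ 2 := by
        grw [pow_le_one₀ (by positivity) mul_inv_le_one, one_mul]

theorem sqrt_sum_norm_sq_le_of_lipschitz_of_sum_eq_zero [SeminormedAddCommGroup V]
    [NormedSpace ℝ V] (h : ι → V → V) (s x : ι → V) (xstar : V) {L : ℝ} (hL : 0 ≤ L)
    (hlip : ∀ i, ‖h i (x i) - h i xstar‖ ≤ L * ‖x i - xstar‖) (hstar : ∑ i, h i xstar = 0) :
    √(∑ i, ‖s i‖ ^ 2) ≤
      √(∑ i, ‖s i - (Fintype.card ι : ℝ)⁻¹ • ∑ j, h j (x j)‖ ^ 2) +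
        L * √(∑ i, ‖x i - (Fintype.card ι : ℝ)⁻¹ • ∑ j, x j‖ ^ 2) +
        L * √(Fintype.card ι : ℝ) * ‖(Fintype.card ι : ℝ)⁻¹ • ∑ i, x i - xstar‖ := by
  set m : ℝ := (Fintype.card ι : ℝ)
  set g := m⁻¹ • ∑ j, h j (x j)
  set xbar := m⁻¹ • ∑ j, x j
  have hg : g = m⁻¹ • ∑ j, (h j (x j) - h j xstar) := by
    rw [sum_sub_distrib, hstar, sub_zero]
  have hconst : √(∑ _i : ι, ‖xbar - xstar‖ ^ 2) = √m * ‖xbar - xstar‖ := by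
    rw [sum_const, card_univ, nsmul_eq_mul, Real.sqrt_mul (Nat.cast_nonneg _),
      Real.sqrt_sq (norm_nonneg _)]
  have hg_le : √(∑ _i : ι, ‖g‖ ^ 2) ≤ L * √(∑ i, ‖x i - xbar‖ ^ 2) + L * √m * ‖xbar - xstar‖ :=
    calc √(∑ _i : ι, ‖g‖ ^ 2) ≤ √(∑ i, ‖h i (x i) - h i xstar‖ ^ 2) := by
          rw [hg]
          exact Real.sqrt_le_sqrt (sum_norm_mean_sq_le _)
      _ ≤ L * √(∑ i, ‖x i - xstar‖ ^ 2) :=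
          sqrt_sum_sq_le_mul_sqrt_sum_sq hL (fun _ ↦ norm_nonneg _) hlip
      _ ≤ L * (√(∑ i, ‖x i - xbar‖ ^ 2) + √(∑ _i : ι, ‖xbar - xstar‖ ^ 2)) := by
          gcongr
          simpa using sqrt_sum_norm_add_sq_le_s13 (fun i ↦ x i - xbar) (fun _ ↦ xbar - xstar)
      _ = L * √(∑ i, ‖x i - xbar‖ ^ 2) + L * √m * ‖xbar - xstar‖ := by
          rw [hconst]
          ring
  calc √(∑ i, ‖s i‖ ^ 2) = √(∑ i, ‖(s i - g) + g‖ ^ 2) := by simp_rw [sub_add_cancel]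
    _ ≤ √(∑ i, ‖s i - g‖ ^ 2) + √(∑ _i : ι, ‖g‖ ^ 2) := sqrt_sum_norm_add_sq_le_s13 _ _
    _ ≤ _ := by grw [hg_le, add_assoc]

end Stacked

section MatVec

variable {n : ℕ}

lemma matVec_eq_toEuclideanCLM (A : Matrix (Fin n) (Fin n) ℝ) (v : EuclideanSpace ℝ (Fin n)) :
    matVec A v = Matrix.toEuclideanCLM (𝕜 := ℝ) A v :=
  rfl

lemma pgrad_eq_rayleighResidual (A : Matrix (Fin n) (Fin n) ℝ) (v : EuclideanSpace ℝ (Fin n)) :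
    pgrad A v = (Matrix.toEuclideanCLM (𝕜 := ℝ) A).rayleighResidual v := by
  rw [pgrad, ContinuousLinearMap.rayleighResidual, ContinuousLinearMap.rayleighQuotient,
    ContinuousLinearMap.reApplyInnerSelf_apply, RCLike.re_to_real, real_inner_comm,
    matVec_eq_toEuclideanCLM]

end MatVec

open scoped ComplexOrder in
lemma Matrix.PosSemidef.isPositive_toEuclideanCLM {𝕜 ι : Type*} [RCLike 𝕜] [Fintype ι]
    [DecidableEq ι] {A : Matrix ι ι 𝕜} (hA : A.PosSemidef) :
    (Matrix.toEuclideanCLM (𝕜 := 𝕜) A).IsPositive :=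
  Matrix.isPositive_toEuclideanLin_iff.mpr hA

/-- bound on the stacked tracking variable for FAST-PCA (first eigenvector).
`q1` is a unit eigenvector of `C = Σᵢ C_i` for its largest eigenvalue `λ₁ = lam ⟨0, _⟩`,
`x₁* = c₁ q₁` for a constant `c₁ ≠ 0`, `L₁ = 6λ₁`, `x̄^(t) = (1/M)Σᵢ x_i^(t)`, and
`g^(t) = (1/M)Σᵢ h_i(x_i^(t))`. -/
theorem fastpca_tracking_variable_bound
    {d M : ℕ} (hd : 0 < d)
    (Ci : Fin M → Matrix (Fin d) (Fin d) ℝ) (hCi : ∀ i, (Ci i).PosSemidef)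
    (lam : Fin d → ℝ) (q : Fin d → EuclideanSpace ℝ (Fin d))
    (hq : Orthonormal ℝ q)
    (heig : ∀ l, matVec (∑ i, Ci i) (q l) = lam l • q l)
    (hmono : ∀ i j : Fin d, i ≤ j → lam j ≤ lam i) (hnn : ∀ l, 0 ≤ lam l)
    (x s : ℕ → Fin M → EuclideanSpace ℝ (Fin d))
    (q1 : EuclideanSpace ℝ (Fin d))
    (hq1eig : matVec (∑ i, Ci i) q1 = lam ⟨0, hd⟩ • q1)
    (c₁ : ℝ)
    (t : ℕ) :
    Real.sqrt (∑ i, ‖s t i‖ ^ 2) ≤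
      Real.sqrt (∑ i, ‖s t i - (M : ℝ)⁻¹ • ∑ j, pgrad (Ci j) (x t j)‖ ^ 2) +
        6 * lam ⟨0, hd⟩ * Real.sqrt (∑ i, ‖x t i - (M : ℝ)⁻¹ • ∑ j, x t j‖ ^ 2) +
        6 * lam ⟨0, hd⟩ * Real.sqrt M * ‖(M : ℝ)⁻¹ • ∑ i, x t i - c₁ • q1‖ := by
  set T : Fin M → EuclideanSpace ℝ (Fin d) →L[ℝ] EuclideanSpace ℝ (Fin d) :=
    fun i ↦ Matrix.toEuclideanCLM (𝕜 := ℝ) (Ci i)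
  have hmatVec : ∀ v, matVec (∑ i, Ci i) v = (∑ i, T i) v := fun v ↦ by
    simp [T, matVec_eq_toEuclideanCLM, map_sum]
  have hTpos : ∀ i, (T i).IsPositive := fun i ↦ (hCi i).isPositive_toEuclideanCLM
  obtain ⟨b, hb⟩ : ∃ b : OrthonormalBasis (Fin d) ℝ (EuclideanSpace ℝ (Fin d)), ⇑b = q :=
    ⟨.mk hq (hq.linearIndependent.span_eq_top_of_card_eq_finrank' (by simp)).ge, by simp⟩
  have hnorm : ∀ i, ‖T i‖ ≤ lam ⟨0, hd⟩ :=
    ContinuousLinearMap.norm_le_of_sum_eigenbasis hTpos b (fun l ↦ by rw [hb, ← hmatVec, heig])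
      (hnn _) (fun l ↦ hmono _ l (Fin.le_def.mpr (Nat.zero_le _)))
  have hstar : ∑ i, pgrad (Ci i) (c₁ • q1) = 0 := by
    simp_rw [pgrad_eq_rayleighResidual]
    rw [ContinuousLinearMap.sum_rayleighResidual]
    refine ContinuousLinearMap.rayleighResidual_eq_zero_of_apply_eq_smul (μ := lam ⟨0, hd⟩) ?_
    rw [map_smul, ← hmatVec, hq1eig, smul_comm]
  have hlip : ∀ i, ‖pgrad (Ci i) (x t i) - pgrad (Ci i) (c₁ • q1)‖
      ≤ 6 * lam ⟨0, hd⟩ * ‖x t i - c₁ • q1‖ := fun i ↦ by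
    rw [pgrad_eq_rayleighResidual, pgrad_eq_rayleighResidual]
    grw [ContinuousLinearMap.norm_rayleighResidual_sub_le (hTpos i).isSymmetric, hnorm i]
  have hL : 0 ≤ 6 * lam ⟨0, hd⟩ := by linarith [hnn ⟨0, hd⟩]
  simpa only [Fintype.card_fin] using
    sqrt_sum_norm_sq_le_of_lipschitz_of_sum_eq_zero (fun i ↦ pgrad (Ci i)) (s t) (x t)
      (c₁ • q1) hL hlip hstar
end
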